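/- arXiv:1512.08594 — 6 statements merged into one kernel-verified Lean document; each statement's English description precedes it below -/
import Mathlib

section
/- Suppose H(t) = Σ h_q t^q is a formal power series with nonnegative integer coefficients satisfying the coefficientwise inequality H(t)(1 − n t + d t²) ≥ 1, where n is a positive integer and d is a nonnegative integer with d < n²/3. Then h_5 > 0. Consequently, a quadratic algebra with n generators and fewer than n²/3 quadratic relations is not 5-step nilpotent. -/
set_option maxHeartbeats 1000000


/-- Golod–Shafarevich consequence for k = 5: if the coefficients of a power
series with nonnegative integer coefficients satisfy `H(t)(1 - nt + dt²) ≥ 1`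
coefficientwise and `d < n²/3`, then `h 5 > 0`. -/
theorem gs_five_step (n : ℕ) (hn : 0 < n) (d : ℕ) (hd : 3 * d < n ^ 2)
    (h : ℕ → ℕ) (h0 : 1 ≤ h 0)
    (h1 : 0 ≤ (h 1 : ℤ) - n * h 0)
    (hq : ∀ q : ℕ, 2 ≤ q → 0 ≤ (h q : ℤ) - n * h (q - 1) + d * h (q - 2)) :
    0 < h 5 := by
  by_contra hc
  push_neg at hc
  have h5 : h 5 = 0 := Nat.le_zero.mp hc
  have e2 := hq 2 (by norm_num)
  have e3 := hq 3 (by norm_num)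
  have e4 := hq 4 (by norm_num)
  have e5 := hq 5 (by norm_num)
  norm_num [h5] at e2 e3 e4 e5
  set N : ℤ := (n : ℤ) with hN
  set D : ℤ := (d : ℤ) with hD
  have hN1 : (1 : ℤ) ≤ N := by rw [hN]; exact_mod_cast hn
  have hD0 : (0 : ℤ) ≤ D := by positivity
  have hd' : 3 * D ≤ N ^ 2 - 1 := by
    have : 3 * D < N ^ 2 := by rw [hN, hD]; exact_mod_cast hd
    linarith
  set a0 : ℤ := (h 0 : ℤ)
  set a1 : ℤ := (h 1 : ℤ)
  set a2 : ℤ := (h 2 : ℤ)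
  set a3 : ℤ := (h 3 : ℤ)
  set a4 : ℤ := (h 4 : ℤ)
  have ha0 : (1 : ℤ) ≤ a0 := by simp only [a0]; exact_mod_cast h0
  have ha1 : N ≤ a1 := by nlinarith
  have ha4 : (0 : ℤ) ≤ a4 := by positivity
  -- J3 : N * D * a2 ≥ (N^2 - D) * a3
  have hJ3 : (N ^ 2 - D) * a3 ≤ N * D * a2 := by
    nlinarith [mul_le_mul_of_nonneg_left e4 (by linarith : (0:ℤ) ≤ N)]
  -- K : N * a2 ≥ (N^2 - D) * a1
  have hK : (N ^ 2 - D) * a1 ≤ N * a2 := by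
    nlinarith [mul_le_mul_of_nonneg_left e2 (by linarith : (0:ℤ) ≤ N),
      mul_le_mul_of_nonneg_left h1 hD0]
  -- J2 : (N^2 - D) * D * a1 ≥ N * (N^2 - 2D) * a2
  have hND : (0:ℤ) ≤ N ^ 2 - D := by nlinarith
  have hJ2 : N * (N ^ 2 - 2 * D) * a2 ≤ (N ^ 2 - D) * D * a1 := by
    nlinarith [mul_le_mul_of_nonneg_left e3 hND]
  have hN2D : (0:ℤ) ≤ N * (N ^ 2 - 2 * D) := by nlinarith
  -- combine
  have final := mul_le_mul_of_nonneg_left hK hN2D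
  have hJ2' := mul_le_mul_of_nonneg_left hJ2 (by linarith : (0:ℤ) ≤ N)
  have h1' : (1:ℤ) ≤ N ^ 2 - 3 * D := by linarith
  have hND1 : (1:ℤ) ≤ N ^ 2 - D := by linarith
  have ha1' : (1:ℤ) ≤ a1 := le_trans hN1 ha1
  have hX1 : (1:ℤ) ≤ N * (N ^ 2 - D) :=
    le_trans (by norm_num) (mul_le_mul hN1 hND1 zero_le_one (by linarith))
  have hX : (1:ℤ) ≤ N * (N ^ 2 - D) * a1 :=
    le_trans (by norm_num) (mul_le_mul hX1 ha1' zero_le_one (by linarith))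
  have key : (1:ℤ) ≤ N * (N ^ 2 - D) * a1 * (N ^ 2 - 3 * D) :=
    le_trans (by norm_num) (mul_le_mul hX h1' zero_le_one (by linarith))
  nlinarith [final, hJ2', key]
end

section
/- Suppose (h_q) is a sequence of nonnegative integers with h_0 = 1, h_1 ≥ n, and h_q ≥ n h_{q−1} − d h_{q−2} for all q ≥ 2, where n is a positive integer and d a nonnegative integer with d < n²/2. Then h_3 > 0. -/
/-- Golod–Shafarevich consequence for k = 3: if `h 0 = 1`, `h 1 ≥ n`,
`h q ≥ n h (q-1) - d h (q-2)` for `q ≥ 2` and `d < n²/2`, then `h 3 > 0`. -/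
theorem gs_three_step (n : ℕ) (hn : 0 < n) (d : ℕ) (hd : 2 * d < n ^ 2)
    (h : ℕ → ℕ) (h0 : h 0 = 1) (h1 : n ≤ h 1)
    (hq : ∀ q : ℕ, 2 ≤ q → (n : ℤ) * h (q - 1) - d * h (q - 2) ≤ (h q : ℤ)) :
    0 < h 3 := by
  have h2 := hq 2 (le_refl 2)
  have h3 := hq 3 (by norm_num)
  simp only [h0] at h2
  norm_num at h2 h3
  have hn' : (0:ℤ) < n := by exact_mod_cast hn
  have hd' : (2:ℤ) * d < (n:ℤ) ^ 2 := by exact_mod_cast hd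
  have h1' : (n:ℤ) ≤ h 1 := by exact_mod_cast h1
  have : (0:ℤ) < h 3 := by nlinarith [h2, h3, h1', hn', hd', (h 2).cast_nonneg (α := ℤ)]
  exact_mod_cast this
end

section
/- Let K be a field and R = K⟨a,b⟩/(b² − a², ba). Then the Hilbert series of R is 1 + 2t + 2t²; in particular R is 3-step nilpotent, i.e., R_3 = 0. -/
open FreeAlgebra

/-- The two-sided ideal (as a `K`-submodule) generated by a set of relations
in a free algebra. -/
noncomputable def idealSpan (K : Type*) [Field K] (n : ℕ)
    (rels : Set (FreeAlgebra K (Fin n))) : Submodule K (FreeAlgebra K (Fin n)) :=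
  Submodule.span K {z | ∃ u v r, r ∈ rels ∧ z = u * r * v}

/-- The word (monomial) in the free algebra determined by a tuple of letters. -/
noncomputable def word (K : Type*) [Field K] (n : ℕ) {q : ℕ} (f : Fin q → Fin n) :
    FreeAlgebra K (Fin n) :=
  ((List.ofFn f).map (FreeAlgebra.ι K)).prod

/-- The degree-`q` graded component of the quotient of the free algebra by a
homogeneous quadratic ideal: the span of the images of all words of length `q`. -/
noncomputable def gradedComp (K : Type*) [Field K] (n : ℕ)
    (rels : Set (FreeAlgebra K (Fin n))) (q : ℕ) :
    Submodule K (FreeAlgebra K (Fin n) ⧸ idealSpan K n rels) :=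
  Submodule.span K
    (Set.range fun f : Fin q → Fin n => Submodule.Quotient.mk (word K n f))

namespace HilbAux
variable (K : Type*) [Field K]

noncomputable abbrev a : FreeAlgebra K (Fin 2) := ι K 0
noncomputable abbrev b : FreeAlgebra K (Fin 2) := ι K 1
noncomputable abbrev rels : Set (FreeAlgebra K (Fin 2)) :=
  {b K * b K - a K * a K, b K * a K}
noncomputable abbrev I : Submodule K (FreeAlgebra K (Fin 2)) := idealSpan K 2 (rels K)

lemma gen_mem {u v r : FreeAlgebra K (Fin 2)} (hr : r ∈ rels K) : u * r * v ∈ I K :=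
  Submodule.subset_span ⟨u, v, r, hr, rfl⟩

lemma r1_mem : (b K * b K - a K * a K) ∈ rels K := Or.inl rfl
lemma r2_mem : (b K * a K) ∈ rels K := Or.inr rfl

lemma I_mul_right {x : FreeAlgebra K (Fin 2)} (hx : x ∈ I K) (c : FreeAlgebra K (Fin 2)) :
    x * c ∈ I K := by
  induction hx using Submodule.span_induction with
  | mem z hz => obtain ⟨u, v, r, hr, rfl⟩ := hz
                exact Submodule.subset_span ⟨u, v * c, r, hr, by noncomm_ring⟩
  | zero => simp
  | add x y _ _ hx hy => rw [add_mul]; exact add_mem hx hy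
  | smul s x _ hx => rw [smul_mul_assoc]; exact Submodule.smul_mem _ _ hx

lemma I_mul_left {x : FreeAlgebra K (Fin 2)} (hx : x ∈ I K) (c : FreeAlgebra K (Fin 2)) :
    c * x ∈ I K := by
  induction hx using Submodule.span_induction with
  | mem z hz => obtain ⟨u, v, r, hr, rfl⟩ := hz
                exact Submodule.subset_span ⟨c * u, v, r, hr, by noncomm_ring⟩
  | zero => simp
  | add x y _ _ hx hy => rw [mul_add]; exact add_mem hx hy
  | smul s x _ hx => rw [mul_smul_comm]; exact Submodule.smul_mem _ _ hx

end HilbAux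

namespace HilbAux
variable (K : Type*) [Field K]

lemma fin2 (i : Fin 2) : i = 0 ∨ i = 1 := by omega

lemma w3_mem (x y z : Fin 2) : ι K x * (ι K y * ι K z) ∈ I K := by
  rcases fin2 x with rfl | rfl <;> rcases fin2 y with rfl | rfl <;>
    rcases fin2 z with rfl | rfl
  · -- aaa
    have h : (ι K 0 * (ι K 0 * ι K 0) : FreeAlgebra K (Fin 2)) =
        b K * (b K * a K) * 1 - 1 * (b K * b K - a K * a K) * a K := by noncomm_ring
    rw [h]; exact sub_mem (gen_mem K (r2_mem K)) (gen_mem K (r1_mem K))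
  · -- aab
    have h : (ι K 0 * (ι K 0 * ι K 1) : FreeAlgebra K (Fin 2)) =
        b K * (b K * b K - a K * a K) * 1 + 1 * (b K * a K) * a K
          - 1 * (b K * b K - a K * a K) * b K := by noncomm_ring
    rw [h]
    exact sub_mem (add_mem (gen_mem K (r1_mem K)) (gen_mem K (r2_mem K)))
      (gen_mem K (r1_mem K))
  · -- aba
    have h : (ι K 0 * (ι K 1 * ι K 0) : FreeAlgebra K (Fin 2)) =
        a K * (b K * a K) * 1 := by noncomm_ring
    rw [h]; exact gen_mem K (r2_mem K)
  · -- abb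
    have h : (ι K 0 * (ι K 1 * ι K 1) : FreeAlgebra K (Fin 2)) =
        a K * (b K * b K - a K * a K) * 1 + b K * (b K * a K) * 1
          - 1 * (b K * b K - a K * a K) * a K := by noncomm_ring
    rw [h]
    exact sub_mem (add_mem (gen_mem K (r1_mem K)) (gen_mem K (r2_mem K)))
      (gen_mem K (r1_mem K))
  · -- baa
    have h : (ι K 1 * (ι K 0 * ι K 0) : FreeAlgebra K (Fin 2)) =
        1 * (b K * a K) * a K := by noncomm_ring
    rw [h]; exact gen_mem K (r2_mem K)
  · -- bab
    have h : (ι K 1 * (ι K 0 * ι K 1) : FreeAlgebra K (Fin 2)) =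
        1 * (b K * a K) * b K := by noncomm_ring
    rw [h]; exact gen_mem K (r2_mem K)
  · -- bba
    have h : (ι K 1 * (ι K 1 * ι K 0) : FreeAlgebra K (Fin 2)) =
        b K * (b K * a K) * 1 := by noncomm_ring
    rw [h]; exact gen_mem K (r2_mem K)
  · -- bbb
    have h : (ι K 1 * (ι K 1 * ι K 1) : FreeAlgebra K (Fin 2)) =
        b K * (b K * b K - a K * a K) * 1 + 1 * (b K * a K) * a K := by noncomm_ring
    rw [h]; exact add_mem (gen_mem K (r1_mem K)) (gen_mem K (r2_mem K))

end HilbAux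

namespace HilbAux
variable (K : Type*) [Field K]

lemma word_succ {q : ℕ} (f : Fin (q + 1) → Fin 2) :
    word K 2 f = ι K (f 0) * word K 2 (fun i => f i.succ) := by
  simp [word, List.ofFn_succ]

lemma word3_mem (f : Fin 3 → Fin 2) : word K 2 f ∈ I K := by
  have h : word K 2 f = ι K (f 0) * (ι K (f 1) * ι K (f 2)) := by
    simp [word, List.ofFn_succ]
  rw [h]; exact w3_mem K _ _ _

lemma wordq_mem : ∀ q : ℕ, 3 ≤ q → ∀ f : Fin q → Fin 2, word K 2 f ∈ I K := by
  intro q hq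
  induction q, hq using Nat.le_induction with
  | base => exact word3_mem K
  | succ n hn ih =>
      intro f
      rw [word_succ]
      exact I_mul_left K (ih fun i => f i.succ) _

def MA : Matrix (Fin 5) (Fin 5) K :=
  !![0,0,0,0,0; 1,0,0,0,0; 0,0,0,0,0; 0,1,0,0,0; 0,0,1,0,0]
def MB : Matrix (Fin 5) (Fin 5) K :=
  !![0,0,0,0,0; 0,0,0,0,0; 1,0,0,0,0; 0,0,1,0,0; 0,0,0,0,0]

lemma hBB : MB K * MB K = MA K * MA K := by
  ext i j
  fin_cases i <;> fin_cases j <;>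
    simp [MA, MB, Matrix.mul_apply, Fin.sum_univ_five]

lemma hBA : MB K * MA K = 0 := by
  ext i j
  fin_cases i <;> fin_cases j <;>
    simp [MA, MB, Matrix.mul_apply, Fin.sum_univ_five]

lemma entAA30 : (MA K * MA K) 3 0 = 1 := by
  simp [MA, Matrix.mul_apply, Fin.sum_univ_five]
lemma entAA40 : (MA K * MA K) 4 0 = 0 := by
  simp [MA, Matrix.mul_apply, Fin.sum_univ_five]
lemma entAB30 : (MA K * MB K) 3 0 = 0 := by
  simp [MA, MB, Matrix.mul_apply, Fin.sum_univ_five]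
lemma entAB40 : (MA K * MB K) 4 0 = 1 := by
  simp [MA, MB, Matrix.mul_apply, Fin.sum_univ_five]

noncomputable def φ : FreeAlgebra K (Fin 2) →ₐ[K] Matrix (Fin 5) (Fin 5) K :=
  FreeAlgebra.lift K ![MA K, MB K]

lemma φ_a : φ K (a K) = MA K := by simp [φ, a]
lemma φ_b : φ K (b K) = MB K := by simp [φ, b]

lemma I_le_ker : I K ≤ LinearMap.ker (φ K).toLinearMap := by
  apply Submodule.span_le.mpr
  rintro z ⟨u, v, r, hr, rfl⟩
  have hr0 : φ K r = 0 := by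
    rcases hr with rfl | rfl
    · simp [map_sub, map_mul, φ_a, φ_b, hBB]
    · simp [map_mul, φ_a, φ_b, hBA]
  simp [LinearMap.mem_ker, map_mul, hr0]

noncomputable def ψ : (FreeAlgebra K (Fin 2) ⧸ I K) →ₗ[K] Matrix (Fin 5) (Fin 5) K :=
  Submodule.liftQ (I K) (φ K).toLinearMap (I_le_ker K)

lemma ψ_mk (x : FreeAlgebra K (Fin 2)) :
    ψ K (Submodule.Quotient.mk x) = φ K x := rfl

lemma indep_of_matrix (x y : FreeAlgebra K (Fin 2))
    (h : LinearIndependent K ![φ K x, φ K y]) :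
    LinearIndependent K
      ![(Submodule.Quotient.mk x : FreeAlgebra K (Fin 2) ⧸ I K),
        Submodule.Quotient.mk y] := by
  apply LinearIndependent.of_comp (ψ K)
  have : (ψ K) ∘ ![(Submodule.Quotient.mk x : FreeAlgebra K (Fin 2) ⧸ I K),
      Submodule.Quotient.mk y] = ![φ K x, φ K y] := by
    funext i
    rcases fin2 i with rfl | rfl <;> simp [ψ_mk]
  rwa [this]

lemma indep_AB : LinearIndependent K ![MA K, MB K] := by
  rw [LinearIndependent.pair_iff]
  intro s t hst
  have h1 := congrFun (congrFun hst 1) 0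
  have h2 := congrFun (congrFun hst 2) 0
  simp [MA, MB] at h1 h2
  exact ⟨h1, h2⟩

lemma indep_AAAB : LinearIndependent K ![MA K * MA K, MA K * MB K] := by
  rw [LinearIndependent.pair_iff]
  intro s t hst
  have h1 := congrFun (congrFun hst 3) 0
  have h2 := congrFun (congrFun hst 4) 0
  simp [entAA30 K, entAA40 K, entAB30 K, entAB40 K] at h1 h2
  exact ⟨h1, h2⟩

lemma one_ne : (Submodule.Quotient.mk 1 : FreeAlgebra K (Fin 2) ⧸ I K) ≠ 0 := by
  intro h
  have h1 : (1 : FreeAlgebra K (Fin 2)) ∈ I K := (Submodule.Quotient.mk_eq_zero _).mp h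
  have h2 := I_le_ker K h1
  rw [LinearMap.mem_ker] at h2
  simp only [AlgHom.toLinearMap_apply, map_one] at h2
  exact one_ne_zero h2

end HilbAux

namespace HilbAux
variable (K : Type*) [Field K]

lemma word0 (f : Fin 0 → Fin 2) : word K 2 f = 1 := by simp [word]
lemma word1 (f : Fin 1 → Fin 2) : word K 2 f = ι K (f 0) := by
  simp [word, List.ofFn_succ]
lemma word2 (f : Fin 2 → Fin 2) : word K 2 f = ι K (f 0) * ι K (f 1) := by
  simp [word, List.ofFn_succ]

lemma rank0 : Module.finrank K (gradedComp K 2 (rels K) 0) = 1 := by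
  have h : (Set.range fun f : Fin 0 → Fin 2 =>
      (Submodule.Quotient.mk (word K 2 f) : FreeAlgebra K (Fin 2) ⧸ I K)) =
      {(Submodule.Quotient.mk 1 : FreeAlgebra K (Fin 2) ⧸ I K)} := by
    rw [Set.range_unique]
    simp [word0]
  rw [gradedComp, h]
  exact finrank_span_singleton (one_ne K)

lemma rank1 : Module.finrank K (gradedComp K 2 (rels K) 1) = 2 := by
  have hspan : gradedComp K 2 (rels K) 1 =
      Submodule.span K (Set.range
        ![(Submodule.Quotient.mk (a K) : FreeAlgebra K (Fin 2) ⧸ I K),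
          Submodule.Quotient.mk (b K)]) := by
    apply le_antisymm <;> apply Submodule.span_le.mpr <;> rintro _ ⟨u, rfl⟩
    · simp only [word1]
      rcases fin2 (u 0) with h | h <;> rw [h] <;> apply Submodule.subset_span
      · exact ⟨0, rfl⟩
      · exact ⟨1, rfl⟩
    · rcases fin2 u with rfl | rfl <;> apply Submodule.subset_span
      · exact ⟨fun _ => 0, by simp only [word1]; rfl⟩
      · exact ⟨fun _ => 1, by simp only [word1]; rfl⟩
  rw [hspan, finrank_span_eq_card]
  · simp
  · apply indep_of_matrix
    have : ![φ K (a K), φ K (b K)] = ![MA K, MB K] := by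
      funext i; rcases fin2 i with rfl | rfl <;> simp [φ_a, φ_b]
    rw [this]
    exact indep_AB K

lemma mk_ba : (Submodule.Quotient.mk (b K * a K) : FreeAlgebra K (Fin 2) ⧸ I K) = 0 := by
  rw [Submodule.Quotient.mk_eq_zero]
  have : b K * a K = 1 * (b K * a K) * 1 := by noncomm_ring
  rw [this]; exact gen_mem K (r2_mem K)

lemma mk_bb : (Submodule.Quotient.mk (b K * b K) : FreeAlgebra K (Fin 2) ⧸ I K) =
    Submodule.Quotient.mk (a K * a K) := by
  rw [Submodule.Quotient.eq]
  have : b K * b K - a K * a K = 1 * (b K * b K - a K * a K) * 1 := by noncomm_ring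
  rw [this]; exact gen_mem K (r1_mem K)

lemma rank2 : Module.finrank K (gradedComp K 2 (rels K) 2) = 2 := by
  have hspan : gradedComp K 2 (rels K) 2 =
      Submodule.span K (Set.range
        ![(Submodule.Quotient.mk (a K * a K) : FreeAlgebra K (Fin 2) ⧸ I K),
          Submodule.Quotient.mk (a K * b K)]) := by
    apply le_antisymm <;> apply Submodule.span_le.mpr <;> rintro _ ⟨u, rfl⟩
    · simp only [word2]
      rcases fin2 (u 0) with h0 | h0 <;> rcases fin2 (u 1) with h1 | h1 <;>
        rw [h0, h1]
      · exact Submodule.subset_span ⟨0, rfl⟩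
      · exact Submodule.subset_span ⟨1, rfl⟩
      · rw [show ((ι K 1 * ι K 0 : FreeAlgebra K (Fin 2))) = b K * a K from rfl]
        rw [mk_ba]; exact Submodule.zero_mem _
      · rw [show ((ι K 1 * ι K 1 : FreeAlgebra K (Fin 2))) = b K * b K from rfl]
        rw [mk_bb]; exact Submodule.subset_span ⟨0, rfl⟩
    · rcases fin2 u with rfl | rfl <;> apply Submodule.subset_span
      · exact ⟨fun _ => 0, by simp only [word2]; rfl⟩
      · exact ⟨![0, 1], by simp only [word2]; rfl⟩
  rw [hspan, finrank_span_eq_card]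
  · simp
  · apply indep_of_matrix
    have : ![φ K (a K * a K), φ K (a K * b K)] = ![MA K * MA K, MA K * MB K] := by
      funext i; rcases fin2 i with rfl | rfl <;> simp [map_mul, φ_a, φ_b]
    rw [this]
    exact indep_AAAB K

lemma rank_ge3 (q : ℕ) (hq : 3 ≤ q) : gradedComp K 2 (rels K) q = ⊥ := by
  rw [gradedComp, Submodule.span_eq_bot]
  rintro _ ⟨f, rfl⟩
  rw [Submodule.Quotient.mk_eq_zero]
  exact wordq_mem K q hq f

end HilbAux

/-- `R = K⟨a,b⟩/(b² − a², ba)` has Hilbert series `1 + 2t + 2t²`; in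
particular `R` is 3-step nilpotent. -/
theorem hilbert_R2 (K : Type*) [Field K] :
    let a : FreeAlgebra K (Fin 2) := ι K 0
    let b : FreeAlgebra K (Fin 2) := ι K 1
    let rels : Set (FreeAlgebra K (Fin 2)) := {b * b - a * a, b * a}
    Module.finrank K (gradedComp K 2 rels 0) = 1 ∧
    Module.finrank K (gradedComp K 2 rels 1) = 2 ∧
    Module.finrank K (gradedComp K 2 rels 2) = 2 ∧
    ∀ q : ℕ, 3 ≤ q → gradedComp K 2 rels q = ⊥ := by
  intro a b rels
  exact ⟨HilbAux.rank0 K, HilbAux.rank1 K, HilbAux.rank2 K, HilbAux.rank_ge3 K⟩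
end

section
/- Let K be a field and R = K⟨a,b,c⟩/(c² − ba, cb − a², b², ca). Then the Hilbert series of R is 1 + 3t + 5t² + 4t³ and R is 4-step nilpotent, i.e., R_4 = 0. -/
open FreeAlgebra

namespace HilbertR3

lemma fin3 (i : Fin 3) : i = 0 ∨ i = 1 ∨ i = 2 := by fin_cases i <;> simp

section
variable (K : Type*) [Field K]

/-- The relation set. -/
abbrev Rels : Set (FreeAlgebra K (Fin 3)) :=
  {ι K 2 * ι K 2 - ι K 1 * ι K 0, ι K 2 * ι K 1 - ι K 0 * ι K 0,
   ι K 1 * ι K 1, ι K 2 * ι K 0}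

lemma hR1 : ι K 2 * ι K 2 - ι K 1 * ι K 0 ∈ Rels K := Set.mem_insert _ _
lemma hR2 : ι K 2 * ι K 1 - ι K 0 * ι K 0 ∈ Rels K :=
  Set.mem_insert_of_mem _ (Set.mem_insert _ _)
lemma hR3 : ι K 1 * ι K 1 ∈ Rels K :=
  Set.mem_insert_of_mem _ (Set.mem_insert_of_mem _ (Set.mem_insert _ _))
lemma hR4 : ι K 2 * ι K 0 ∈ Rels K :=
  Set.mem_insert_of_mem _ (Set.mem_insert_of_mem _ (Set.mem_insert_of_mem _ rfl))

lemma gmem (u v : FreeAlgebra K (Fin 3)) {r : FreeAlgebra K (Fin 3)} (h : r ∈ Rels K) :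
    u * r * v ∈ idealSpan K 3 (Rels K) :=
  Submodule.subset_span ⟨u, v, r, h, rfl⟩

lemma mul_left_mem (x : FreeAlgebra K (Fin 3)) {p : FreeAlgebra K (Fin 3)}
    (hp : p ∈ idealSpan K 3 (Rels K)) : x * p ∈ idealSpan K 3 (Rels K) := by
  unfold idealSpan at hp
  induction hp using Submodule.span_induction with
  | mem z hz =>
    obtain ⟨u, v, r, hr, rfl⟩ := hz
    exact Submodule.subset_span ⟨x * u, v, r, hr, by noncomm_ring⟩
  | zero => rw [mul_zero]; exact zero_mem _
  | add y z _ _ hy hz => rw [mul_add]; exact add_mem hy hz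
  | smul t y _ hy => rw [mul_smul_comm]; exact Submodule.smul_mem _ t hy

/-! ### Word computation lemmas -/

lemma word_zero (f : Fin 0 → Fin 3) : word K 3 f = 1 := by
  simp [word]

lemma word_succ {q : ℕ} (f : Fin (q + 1) → Fin 3) :
    word K 3 f = ι K (f 0) * word K 3 (fun i => f i.succ) := by
  rw [word, word, List.ofFn_succ, List.map_cons, List.prod_cons]

lemma word1_eq (f : Fin 1 → Fin 3) : word K 3 f = ι K (f 0) := by
  rw [word_succ, word_zero, mul_one]

lemma word2_eq (f : Fin 2 → Fin 3) : word K 3 f = ι K (f 0) * ι K (f 1) := by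
  rw [word_succ, word_succ, word_zero, mul_one]; rfl

lemma word3_eq (f : Fin 3 → Fin 3) :
    word K 3 f = ι K (f 0) * (ι K (f 1) * ι K (f 2)) := by
  rw [word_succ, word_succ, word_succ, word_zero, mul_one]; rfl

lemma word4_eq (f : Fin 4 → Fin 3) :
    word K 3 f = ι K (f 0) * (ι K (f 1) * (ι K (f 2) * ι K (f 3))) := by
  rw [word_succ, word_succ, word_succ, word_succ, word_zero, mul_one]; rfl

/-! ### The 13-dimensional representation -/

/-- A linear endomorphism of `Fin 13 → K` determined by a partial "shift"
function on coordinates. -/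
noncomputable def LofFun (g : Fin 13 → Option (Fin 13)) :
    (Fin 13 → K) →ₗ[K] (Fin 13 → K) where
  toFun v j := (g j).elim 0 v
  map_add' x y := funext fun j => by rcases hgj : g j with _ | i <;> simp [hgj]
  map_smul' c x := funext fun j => by rcases hgj : g j with _ | i <;> simp [hgj]

lemma LofFun_apply (g : Fin 13 → Option (Fin 13)) (v : Fin 13 → K) (j : Fin 13) :
    LofFun K g v j = (g j).elim 0 v := rfl

lemma LofFun_comp (g g' : Fin 13 → Option (Fin 13)) :
    LofFun K g * LofFun K g' = LofFun K (fun j => (g j).bind g') := by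
  refine LinearMap.ext fun v => funext fun j => ?_
  rw [Module.End.mul_apply, LofFun_apply, LofFun_apply]
  rcases hgj : g j with _ | i <;> simp [hgj, LofFun_apply]

lemma LofFun_none : LofFun K (fun _ => none) = 0 :=
  LinearMap.ext fun v => funext fun j => rfl

def ga : Fin 13 → Option (Fin 13) :=
  ![none, some 0, none, none, some 1, some 2, some 3, none, none, some 4, some 6, some 7, some 8]

def gb : Fin 13 → Option (Fin 13) :=
  ![none, none, some 0, none, none, none, none, some 1, some 3, some 6, none, none, none]

def gc : Fin 13 → Option (Fin 13) :=
  ![none, none, none, some 0, some 2, none, none, some 3, none, some 7, some 8, none, none]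

noncomputable def LA : (Fin 13 → K) →ₗ[K] (Fin 13 → K) := LofFun K ga
noncomputable def LB : (Fin 13 → K) →ₗ[K] (Fin 13 → K) := LofFun K gb
noncomputable def LC : (Fin 13 → K) →ₗ[K] (Fin 13 → K) := LofFun K gc

noncomputable def gen : Fin 3 → Module.End K (Fin 13 → K) :=
  fun i => if i = 0 then LA K else if i = 1 then LB K else LC K

noncomputable def pim : FreeAlgebra K (Fin 3) →ₐ[K] Module.End K (Fin 13 → K) :=
  FreeAlgebra.lift K (gen K)

lemma pim_0 : pim K (ι K 0) = LA K := by
  rw [pim, FreeAlgebra.lift_ι_apply]; simp [gen]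

lemma pim_1 : pim K (ι K 1) = LB K := by
  rw [pim, FreeAlgebra.lift_ι_apply]; simp [gen]

lemma pim_2 : pim K (ι K 2) = LC K := by
  rw [pim, FreeAlgebra.lift_ι_apply]; simp [gen]

lemma opid1 : LC K * LC K = LB K * LA K := by
  rw [LA, LB, LC, LofFun_comp, LofFun_comp]
  congr 1; funext j; revert j; decide

lemma opid2 : LC K * LB K = LA K * LA K := by
  rw [LA, LB, LC, LofFun_comp, LofFun_comp]
  congr 1; funext j; revert j; decide

lemma opid3 : LB K * LB K = 0 := by
  rw [LB, LofFun_comp]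
  have h : (fun j => (gb j).bind gb) = fun _ => (none : Option (Fin 13)) := by
    funext j; revert j; decide
  rw [h, LofFun_none]

lemma opid4 : LC K * LA K = 0 := by
  rw [LA, LC, LofFun_comp]
  have h : (fun j => (gc j).bind ga) = fun _ => (none : Option (Fin 13)) := by
    funext j; revert j; decide
  rw [h, LofFun_none]

lemma relzero {r : FreeAlgebra K (Fin 3)} (hr : r ∈ Rels K) : pim K r = 0 := by
  simp only [Rels, Set.mem_insert_iff, Set.mem_singleton_iff] at hr
  rcases hr with rfl | rfl | rfl | rfl
  · rw [map_sub, map_mul, map_mul, pim_0, pim_1, pim_2, opid1, sub_self]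
  · rw [map_sub, map_mul, map_mul, pim_0, pim_1, pim_2, opid2, sub_self]
  · rw [map_mul, pim_1, opid3]
  · rw [map_mul, pim_0, pim_2, opid4]

/-- Standard basis vectors of the 13-dimensional module. -/
noncomputable def e (i : Fin 13) : Fin 13 → K := Pi.single i 1

lemma hker :
    idealSpan K 3 (Rels K) ≤
      LinearMap.ker ((LinearMap.applyₗ (e K 0)).comp (pim K).toLinearMap) := by
  unfold idealSpan
  rw [Submodule.span_le]
  rintro z ⟨u, v, r, hr, rfl⟩
  simp [LinearMap.mem_ker, map_mul, relzero K hr]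

noncomputable def phi :
    (FreeAlgebra K (Fin 3) ⧸ idealSpan K 3 (Rels K)) →ₗ[K] (Fin 13 → K) :=
  Submodule.liftQ _ _ (hker K)

lemma phi_mk (x : FreeAlgebra K (Fin 3)) :
    phi K (Submodule.Quotient.mk x) = pim K x (e K 0) := by
  rw [phi, Submodule.liftQ_apply]; rfl

lemma LofFun_single (g : Fin 13 → Option (Fin 13)) (i k : Fin 13)
    (h : ∀ j, g j = some i ↔ j = k) :
    LofFun K g (Pi.single i 1) = Pi.single k (1 : K) := by
  funext j
  rw [LofFun_apply]
  rcases hgj : g j with _ | m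
  · have hjk : j ≠ k := fun hh => by rw [(h j).mpr hh] at hgj; cases hgj
    simp [Pi.single_apply, hjk]
  · have hmi : m = i ↔ j = k := by
      constructor
      · intro hmi; exact (h j).mp (by rw [hgj, hmi])
      · intro hjk; have := (h j).mpr hjk; rw [hgj] at this; exact Option.some_injective _ this
    by_cases hjk : j = k
    · simp [Pi.single_apply, hjk, hmi.mpr hjk]
    · have : ¬ m = i := fun hc => hjk (hmi.mp hc)
      simp [Pi.single_apply, hjk, this]

-- single steps of the representation on basis vectors
lemma stA0 : LA K (e K 0) = e K 1 := LofFun_single K ga 0 1 (by decide)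
lemma stA1 : LA K (e K 1) = e K 4 := LofFun_single K ga 1 4 (by decide)
lemma stA2 : LA K (e K 2) = e K 5 := LofFun_single K ga 2 5 (by decide)
lemma stA3 : LA K (e K 3) = e K 6 := LofFun_single K ga 3 6 (by decide)
lemma stA4 : LA K (e K 4) = e K 9 := LofFun_single K ga 4 9 (by decide)
lemma stA6 : LA K (e K 6) = e K 10 := LofFun_single K ga 6 10 (by decide)
lemma stA7 : LA K (e K 7) = e K 11 := LofFun_single K ga 7 11 (by decide)
lemma stA8 : LA K (e K 8) = e K 12 := LofFun_single K ga 8 12 (by decide)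
lemma stB0 : LB K (e K 0) = e K 2 := LofFun_single K gb 0 2 (by decide)
lemma stB1 : LB K (e K 1) = e K 7 := LofFun_single K gb 1 7 (by decide)
lemma stB3 : LB K (e K 3) = e K 8 := LofFun_single K gb 3 8 (by decide)
lemma stC0 : LC K (e K 0) = e K 3 := LofFun_single K gc 0 3 (by decide)

lemma e_ne_zero (i : Fin 13) : e K i ≠ 0 := by
  intro h
  have := congrFun h i
  rw [e, Pi.single_eq_same] at this
  exact one_ne_zero this

lemma e_indep : LinearIndependent K (e K) := by
  have hb := (Pi.basisFun K (Fin 13)).linearIndependent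
  have he : e K = ⇑(Pi.basisFun K (Fin 13)) := by
    funext i; rw [e, Pi.basisFun_apply]
  rw [he]; exact hb

lemma e_comp_indep {d : ℕ} (σ : Fin d → Fin 13) (hσ : Function.Injective σ) :
    LinearIndependent K (fun i => e K (σ i)) :=
  (e_indep K).comp σ hσ

/-! ### Degree ≤ 3 normal-form families -/

noncomputable def v1 : Fin 3 → (FreeAlgebra K (Fin 3) ⧸ idealSpan K 3 (Rels K)) :=
  ![Submodule.Quotient.mk (ι K 0), Submodule.Quotient.mk (ι K 1),
    Submodule.Quotient.mk (ι K 2)]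

noncomputable def v2 : Fin 5 → (FreeAlgebra K (Fin 3) ⧸ idealSpan K 3 (Rels K)) :=
  ![Submodule.Quotient.mk (ι K 0 * ι K 0), Submodule.Quotient.mk (ι K 0 * ι K 1),
    Submodule.Quotient.mk (ι K 0 * ι K 2), Submodule.Quotient.mk (ι K 1 * ι K 0),
    Submodule.Quotient.mk (ι K 1 * ι K 2)]

noncomputable def v3 : Fin 4 → (FreeAlgebra K (Fin 3) ⧸ idealSpan K 3 (Rels K)) :=
  ![Submodule.Quotient.mk (ι K 0 * (ι K 0 * ι K 0)),
    Submodule.Quotient.mk (ι K 0 * (ι K 0 * ι K 2)),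
    Submodule.Quotient.mk (ι K 0 * (ι K 1 * ι K 0)),
    Submodule.Quotient.mk (ι K 0 * (ι K 1 * ι K 2))]

/-! ### Reduction certificates -/

lemma mz_aab : ι K 0 * (ι K 0 * ι K 1) ∈ idealSpan K 3 (Rels K) := by
  have h : (ι K 0 * (ι K 0 * ι K 1) : FreeAlgebra K (Fin 3)) = -(1 * (ι K 2 * ι K 1 - ι K 0 * ι K 0) * (ι K 1)) + (ι K 2) * (ι K 1 * ι K 1) * 1 := by noncomm_ring
  rw [h]; exact (add_mem (neg_mem (gmem K 1 (ι K 1) (hR2 K))) (gmem K (ι K 2) 1 (hR3 K)))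

lemma mz_abb : ι K 0 * (ι K 1 * ι K 1) ∈ idealSpan K 3 (Rels K) := by
  have h : (ι K 0 * (ι K 1 * ι K 1) : FreeAlgebra K (Fin 3)) = (ι K 0) * (ι K 1 * ι K 1) * 1 := by noncomm_ring
  rw [h]; exact (gmem K (ι K 0) 1 (hR3 K))

lemma mz_aca : ι K 0 * (ι K 2 * ι K 0) ∈ idealSpan K 3 (Rels K) := by
  have h : (ι K 0 * (ι K 2 * ι K 0) : FreeAlgebra K (Fin 3)) = (ι K 0) * (ι K 2 * ι K 0) * 1 := by noncomm_ring
  rw [h]; exact (gmem K (ι K 0) 1 (hR4 K))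

lemma rd_acb : ι K 0 * (ι K 2 * ι K 1) - (ι K 0 * (ι K 0 * ι K 0)) ∈ idealSpan K 3 (Rels K) := by
  have h : (ι K 0 * (ι K 2 * ι K 1) - (ι K 0 * (ι K 0 * ι K 0)) : FreeAlgebra K (Fin 3)) = (ι K 0) * (ι K 2 * ι K 1 - ι K 0 * ι K 0) * 1 := by noncomm_ring
  rw [h]; exact (gmem K (ι K 0) 1 (hR2 K))

lemma rd_acc : ι K 0 * (ι K 2 * ι K 2) - (ι K 0 * (ι K 1 * ι K 0)) ∈ idealSpan K 3 (Rels K) := by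
  have h : (ι K 0 * (ι K 2 * ι K 2) - (ι K 0 * (ι K 1 * ι K 0)) : FreeAlgebra K (Fin 3)) = (ι K 0) * (ι K 2 * ι K 2 - ι K 1 * ι K 0) * 1 := by noncomm_ring
  rw [h]; exact (gmem K (ι K 0) 1 (hR1 K))

lemma mz_baa : ι K 1 * (ι K 0 * ι K 0) ∈ idealSpan K 3 (Rels K) := by
  have h : (ι K 1 * (ι K 0 * ι K 0) : FreeAlgebra K (Fin 3)) = -(1 * (ι K 2 * ι K 2 - ι K 1 * ι K 0) * (ι K 0)) + (ι K 2) * (ι K 2 * ι K 0) * 1 := by noncomm_ring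
  rw [h]; exact (add_mem (neg_mem (gmem K 1 (ι K 0) (hR1 K))) (gmem K (ι K 2) 1 (hR4 K)))

lemma mz_bab : ι K 1 * (ι K 0 * ι K 1) ∈ idealSpan K 3 (Rels K) := by
  have h : (ι K 1 * (ι K 0 * ι K 1) : FreeAlgebra K (Fin 3)) = 1 * (ι K 2 * ι K 0) * (ι K 0) + -(1 * (ι K 2 * ι K 2 - ι K 1 * ι K 0) * (ι K 1)) + (ι K 2) * (ι K 2 * ι K 1 - ι K 0 * ι K 0) * 1 := by noncomm_ring
  rw [h]; exact (add_mem (add_mem (gmem K 1 (ι K 0) (hR4 K)) (neg_mem (gmem K 1 (ι K 1) (hR1 K)))) (gmem K (ι K 2) 1 (hR2 K)))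

lemma rd_bac : ι K 1 * (ι K 0 * ι K 2) - (ι K 0 * (ι K 0 * ι K 0)) ∈ idealSpan K 3 (Rels K) := by
  have h : (ι K 1 * (ι K 0 * ι K 2) - (ι K 0 * (ι K 0 * ι K 0)) : FreeAlgebra K (Fin 3)) = 1 * (ι K 2 * ι K 1 - ι K 0 * ι K 0) * (ι K 0) + -(1 * (ι K 2 * ι K 2 - ι K 1 * ι K 0) * (ι K 2)) + (ι K 2) * (ι K 2 * ι K 2 - ι K 1 * ι K 0) * 1 := by noncomm_ring
  rw [h]; exact (add_mem (add_mem (gmem K 1 (ι K 0) (hR2 K)) (neg_mem (gmem K 1 (ι K 2) (hR1 K)))) (gmem K (ι K 2) 1 (hR1 K)))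

lemma mz_bba : ι K 1 * (ι K 1 * ι K 0) ∈ idealSpan K 3 (Rels K) := by
  have h : (ι K 1 * (ι K 1 * ι K 0) : FreeAlgebra K (Fin 3)) = 1 * (ι K 1 * ι K 1) * (ι K 0) := by noncomm_ring
  rw [h]; exact (gmem K 1 (ι K 0) (hR3 K))

lemma mz_bbb : ι K 1 * (ι K 1 * ι K 1) ∈ idealSpan K 3 (Rels K) := by
  have h : (ι K 1 * (ι K 1 * ι K 1) : FreeAlgebra K (Fin 3)) = 1 * (ι K 1 * ι K 1) * (ι K 1) := by noncomm_ring
  rw [h]; exact (gmem K 1 (ι K 1) (hR3 K))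

lemma mz_bbc : ι K 1 * (ι K 1 * ι K 2) ∈ idealSpan K 3 (Rels K) := by
  have h : (ι K 1 * (ι K 1 * ι K 2) : FreeAlgebra K (Fin 3)) = 1 * (ι K 1 * ι K 1) * (ι K 2) := by noncomm_ring
  rw [h]; exact (gmem K 1 (ι K 2) (hR3 K))

lemma mz_bca : ι K 1 * (ι K 2 * ι K 0) ∈ idealSpan K 3 (Rels K) := by
  have h : (ι K 1 * (ι K 2 * ι K 0) : FreeAlgebra K (Fin 3)) = (ι K 1) * (ι K 2 * ι K 0) * 1 := by noncomm_ring
  rw [h]; exact (gmem K (ι K 1) 1 (hR4 K))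

lemma mz_bcb : ι K 1 * (ι K 2 * ι K 1) ∈ idealSpan K 3 (Rels K) := by
  have h : (ι K 1 * (ι K 2 * ι K 1) : FreeAlgebra K (Fin 3)) = -(1 * (ι K 2 * ι K 2 - ι K 1 * ι K 0) * (ι K 0)) + (ι K 1) * (ι K 2 * ι K 1 - ι K 0 * ι K 0) * 1 + (ι K 2) * (ι K 2 * ι K 0) * 1 := by noncomm_ring
  rw [h]; exact (add_mem (add_mem (neg_mem (gmem K 1 (ι K 0) (hR1 K))) (gmem K (ι K 1) 1 (hR2 K))) (gmem K (ι K 2) 1 (hR4 K)))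

lemma mz_bcc : ι K 1 * (ι K 2 * ι K 2) ∈ idealSpan K 3 (Rels K) := by
  have h : (ι K 1 * (ι K 2 * ι K 2) : FreeAlgebra K (Fin 3)) = 1 * (ι K 1 * ι K 1) * (ι K 0) + (ι K 1) * (ι K 2 * ι K 2 - ι K 1 * ι K 0) * 1 := by noncomm_ring
  rw [h]; exact (add_mem (gmem K 1 (ι K 0) (hR3 K)) (gmem K (ι K 1) 1 (hR1 K)))

lemma mz_caa : ι K 2 * (ι K 0 * ι K 0) ∈ idealSpan K 3 (Rels K) := by
  have h : (ι K 2 * (ι K 0 * ι K 0) : FreeAlgebra K (Fin 3)) = 1 * (ι K 2 * ι K 0) * (ι K 0) := by noncomm_ring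
  rw [h]; exact (gmem K 1 (ι K 0) (hR4 K))

lemma mz_cab : ι K 2 * (ι K 0 * ι K 1) ∈ idealSpan K 3 (Rels K) := by
  have h : (ι K 2 * (ι K 0 * ι K 1) : FreeAlgebra K (Fin 3)) = 1 * (ι K 2 * ι K 0) * (ι K 1) := by noncomm_ring
  rw [h]; exact (gmem K 1 (ι K 1) (hR4 K))

lemma mz_cac : ι K 2 * (ι K 0 * ι K 2) ∈ idealSpan K 3 (Rels K) := by
  have h : (ι K 2 * (ι K 0 * ι K 2) : FreeAlgebra K (Fin 3)) = 1 * (ι K 2 * ι K 0) * (ι K 2) := by noncomm_ring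
  rw [h]; exact (gmem K 1 (ι K 2) (hR4 K))

lemma rd_cba : ι K 2 * (ι K 1 * ι K 0) - (ι K 0 * (ι K 0 * ι K 0)) ∈ idealSpan K 3 (Rels K) := by
  have h : (ι K 2 * (ι K 1 * ι K 0) - (ι K 0 * (ι K 0 * ι K 0)) : FreeAlgebra K (Fin 3)) = 1 * (ι K 2 * ι K 1 - ι K 0 * ι K 0) * (ι K 0) := by noncomm_ring
  rw [h]; exact (gmem K 1 (ι K 0) (hR2 K))

lemma mz_cbb : ι K 2 * (ι K 1 * ι K 1) ∈ idealSpan K 3 (Rels K) := by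
  have h : (ι K 2 * (ι K 1 * ι K 1) : FreeAlgebra K (Fin 3)) = (ι K 2) * (ι K 1 * ι K 1) * 1 := by noncomm_ring
  rw [h]; exact (gmem K (ι K 2) 1 (hR3 K))

lemma rd_cbc : ι K 2 * (ι K 1 * ι K 2) - (ι K 0 * (ι K 0 * ι K 2)) ∈ idealSpan K 3 (Rels K) := by
  have h : (ι K 2 * (ι K 1 * ι K 2) - (ι K 0 * (ι K 0 * ι K 2)) : FreeAlgebra K (Fin 3)) = 1 * (ι K 2 * ι K 1 - ι K 0 * ι K 0) * (ι K 2) := by noncomm_ring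
  rw [h]; exact (gmem K 1 (ι K 2) (hR2 K))

lemma mz_cca : ι K 2 * (ι K 2 * ι K 0) ∈ idealSpan K 3 (Rels K) := by
  have h : (ι K 2 * (ι K 2 * ι K 0) : FreeAlgebra K (Fin 3)) = (ι K 2) * (ι K 2 * ι K 0) * 1 := by noncomm_ring
  rw [h]; exact (gmem K (ι K 2) 1 (hR4 K))

lemma mz_ccb : ι K 2 * (ι K 2 * ι K 1) ∈ idealSpan K 3 (Rels K) := by
  have h : (ι K 2 * (ι K 2 * ι K 1) : FreeAlgebra K (Fin 3)) = 1 * (ι K 2 * ι K 0) * (ι K 0) + (ι K 2) * (ι K 2 * ι K 1 - ι K 0 * ι K 0) * 1 := by noncomm_ring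
  rw [h]; exact (add_mem (gmem K 1 (ι K 0) (hR4 K)) (gmem K (ι K 2) 1 (hR2 K)))

lemma rd_ccc : ι K 2 * (ι K 2 * ι K 2) - (ι K 0 * (ι K 0 * ι K 0)) ∈ idealSpan K 3 (Rels K) := by
  have h : (ι K 2 * (ι K 2 * ι K 2) - (ι K 0 * (ι K 0 * ι K 0)) : FreeAlgebra K (Fin 3)) = 1 * (ι K 2 * ι K 1 - ι K 0 * ι K 0) * (ι K 0) + (ι K 2) * (ι K 2 * ι K 2 - ι K 1 * ι K 0) * 1 := by noncomm_ring
  rw [h]; exact (add_mem (gmem K 1 (ι K 0) (hR2 K)) (gmem K (ι K 2) 1 (hR1 K)))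

lemma xm_aaa (x : Fin 3) : ι K x * (ι K 0 * (ι K 0 * ι K 0)) ∈ idealSpan K 3 (Rels K) := by
  rcases fin3 x with h|h|h <;> subst h
  · have h : (ι K 0 * (ι K 0 * (ι K 0 * ι K 0)) : FreeAlgebra K (Fin 3)) = -(1 * (ι K 2 * ι K 1 - ι K 0 * ι K 0) * (ι K 0 * ι K 0)) + 1 * (ι K 2 * ι K 2 - ι K 1 * ι K 0) * (ι K 2 * ι K 0) + -((ι K 2) * (ι K 2 * ι K 2 - ι K 1 * ι K 0) * (ι K 0)) + (ι K 1 * ι K 0) * (ι K 2 * ι K 0) * 1 := by noncomm_ring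
    rw [h]; exact (add_mem (add_mem (add_mem (neg_mem (gmem K 1 (ι K 0 * ι K 0) (hR2 K))) (gmem K 1 (ι K 2 * ι K 0) (hR1 K))) (neg_mem (gmem K (ι K 2) (ι K 0) (hR1 K)))) (gmem K (ι K 1 * ι K 0) 1 (hR4 K)))
  · have h : (ι K 1 * (ι K 0 * (ι K 0 * ι K 0)) : FreeAlgebra K (Fin 3)) = -(1 * (ι K 2 * ι K 2 - ι K 1 * ι K 0) * (ι K 0 * ι K 0)) + (ι K 2) * (ι K 2 * ι K 0) * (ι K 0) := by noncomm_ring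
    rw [h]; exact (add_mem (neg_mem (gmem K 1 (ι K 0 * ι K 0) (hR1 K))) (gmem K (ι K 2) (ι K 0) (hR4 K)))
  · have h : (ι K 2 * (ι K 0 * (ι K 0 * ι K 0)) : FreeAlgebra K (Fin 3)) = 1 * (ι K 2 * ι K 0) * (ι K 0 * ι K 0) := by noncomm_ring
    rw [h]; exact (gmem K 1 (ι K 0 * ι K 0) (hR4 K))

lemma xm_aac (x : Fin 3) : ι K x * (ι K 0 * (ι K 0 * ι K 2)) ∈ idealSpan K 3 (Rels K) := by
  rcases fin3 x with h|h|h <;> subst h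
  · have h : (ι K 0 * (ι K 0 * (ι K 0 * ι K 2)) : FreeAlgebra K (Fin 3)) = 1 * (ι K 2 * ι K 0) * (ι K 0 * ι K 0) + -(1 * (ι K 2 * ι K 1 - ι K 0 * ι K 0) * (ι K 0 * ι K 2)) + -(1 * (ι K 2 * ι K 2 - ι K 1 * ι K 0) * (ι K 1 * ι K 0)) + 1 * (ι K 2 * ι K 2 - ι K 1 * ι K 0) * (ι K 2 * ι K 2) + (ι K 2) * (ι K 2 * ι K 1 - ι K 0 * ι K 0) * (ι K 0) + -((ι K 2) * (ι K 2 * ι K 2 - ι K 1 * ι K 0) * (ι K 2)) + (ι K 1 * ι K 0) * (ι K 2 * ι K 2 - ι K 1 * ι K 0) * 1 := by noncomm_ring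
    rw [h]; exact (add_mem (add_mem (add_mem (add_mem (add_mem (add_mem (gmem K 1 (ι K 0 * ι K 0) (hR4 K)) (neg_mem (gmem K 1 (ι K 0 * ι K 2) (hR2 K)))) (neg_mem (gmem K 1 (ι K 1 * ι K 0) (hR1 K)))) (gmem K 1 (ι K 2 * ι K 2) (hR1 K))) (gmem K (ι K 2) (ι K 0) (hR2 K))) (neg_mem (gmem K (ι K 2) (ι K 2) (hR1 K)))) (gmem K (ι K 1 * ι K 0) 1 (hR1 K)))
  · have h : (ι K 1 * (ι K 0 * (ι K 0 * ι K 2)) : FreeAlgebra K (Fin 3)) = -(1 * (ι K 2 * ι K 2 - ι K 1 * ι K 0) * (ι K 0 * ι K 2)) + (ι K 2) * (ι K 2 * ι K 0) * (ι K 2) := by noncomm_ring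
    rw [h]; exact (add_mem (neg_mem (gmem K 1 (ι K 0 * ι K 2) (hR1 K))) (gmem K (ι K 2) (ι K 2) (hR4 K)))
  · have h : (ι K 2 * (ι K 0 * (ι K 0 * ι K 2)) : FreeAlgebra K (Fin 3)) = 1 * (ι K 2 * ι K 0) * (ι K 0 * ι K 2) := by noncomm_ring
    rw [h]; exact (gmem K 1 (ι K 0 * ι K 2) (hR4 K))

lemma xm_aba (x : Fin 3) : ι K x * (ι K 0 * (ι K 1 * ι K 0)) ∈ idealSpan K 3 (Rels K) := by
  rcases fin3 x with h|h|h <;> subst h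
  · have h : (ι K 0 * (ι K 0 * (ι K 1 * ι K 0)) : FreeAlgebra K (Fin 3)) = -(1 * (ι K 2 * ι K 1 - ι K 0 * ι K 0) * (ι K 1 * ι K 0)) + (ι K 2) * (ι K 1 * ι K 1) * (ι K 0) := by noncomm_ring
    rw [h]; exact (add_mem (neg_mem (gmem K 1 (ι K 1 * ι K 0) (hR2 K))) (gmem K (ι K 2) (ι K 0) (hR3 K)))
  · have h : (ι K 1 * (ι K 0 * (ι K 1 * ι K 0)) : FreeAlgebra K (Fin 3)) = 1 * (ι K 2 * ι K 0) * (ι K 0 * ι K 0) + -(1 * (ι K 2 * ι K 2 - ι K 1 * ι K 0) * (ι K 1 * ι K 0)) + (ι K 2) * (ι K 2 * ι K 1 - ι K 0 * ι K 0) * (ι K 0) := by noncomm_ring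
    rw [h]; exact (add_mem (add_mem (gmem K 1 (ι K 0 * ι K 0) (hR4 K)) (neg_mem (gmem K 1 (ι K 1 * ι K 0) (hR1 K)))) (gmem K (ι K 2) (ι K 0) (hR2 K)))
  · have h : (ι K 2 * (ι K 0 * (ι K 1 * ι K 0)) : FreeAlgebra K (Fin 3)) = 1 * (ι K 2 * ι K 0) * (ι K 1 * ι K 0) := by noncomm_ring
    rw [h]; exact (gmem K 1 (ι K 1 * ι K 0) (hR4 K))

lemma xm_abc (x : Fin 3) : ι K x * (ι K 0 * (ι K 1 * ι K 2)) ∈ idealSpan K 3 (Rels K) := by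
  rcases fin3 x with h|h|h <;> subst h
  · have h : (ι K 0 * (ι K 0 * (ι K 1 * ι K 2)) : FreeAlgebra K (Fin 3)) = -(1 * (ι K 2 * ι K 1 - ι K 0 * ι K 0) * (ι K 1 * ι K 2)) + (ι K 2) * (ι K 1 * ι K 1) * (ι K 2) := by noncomm_ring
    rw [h]; exact (add_mem (neg_mem (gmem K 1 (ι K 1 * ι K 2) (hR2 K))) (gmem K (ι K 2) (ι K 2) (hR3 K)))
  · have h : (ι K 1 * (ι K 0 * (ι K 1 * ι K 2)) : FreeAlgebra K (Fin 3)) = 1 * (ι K 2 * ι K 0) * (ι K 0 * ι K 2) + -(1 * (ι K 2 * ι K 2 - ι K 1 * ι K 0) * (ι K 1 * ι K 2)) + (ι K 2) * (ι K 2 * ι K 1 - ι K 0 * ι K 0) * (ι K 2) := by noncomm_ring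
    rw [h]; exact (add_mem (add_mem (gmem K 1 (ι K 0 * ι K 2) (hR4 K)) (neg_mem (gmem K 1 (ι K 1 * ι K 2) (hR1 K)))) (gmem K (ι K 2) (ι K 2) (hR2 K)))
  · have h : (ι K 2 * (ι K 0 * (ι K 1 * ι K 2)) : FreeAlgebra K (Fin 3)) = 1 * (ι K 2 * ι K 0) * (ι K 1 * ι K 2) := by noncomm_ring
    rw [h]; exact (gmem K 1 (ι K 1 * ι K 2) (hR4 K))


lemma step4 (x : Fin 3) (t N : FreeAlgebra K (Fin 3))
    (h1 : t - N ∈ idealSpan K 3 (Rels K)) (h2 : ι K x * N ∈ idealSpan K 3 (Rels K)) :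
    ι K x * t ∈ idealSpan K 3 (Rels K) := by
  have h : (ι K x * t : FreeAlgebra K (Fin 3)) = ι K x * (t - N) + ι K x * N := by noncomm_ring
  rw [h]
  exact add_mem (mul_left_mem K _ h1) h2

/-! ### Spanning lemmas -/

lemma w2_core (x y : Fin 3) :
    (Submodule.Quotient.mk (ι K x * ι K y) :
      FreeAlgebra K (Fin 3) ⧸ idealSpan K 3 (Rels K)) ∈
      Submodule.span K (Set.range (v2 K)) := by
  rcases fin3 x with h|h|h <;> subst h <;> rcases fin3 y with h|h|h <;> subst h
  · exact Submodule.subset_span ⟨0, rfl⟩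
  · exact Submodule.subset_span ⟨1, rfl⟩
  · exact Submodule.subset_span ⟨2, rfl⟩
  · exact Submodule.subset_span ⟨3, rfl⟩
  · have h : (ι K 1 * ι K 1 : FreeAlgebra K (Fin 3)) = 1 * (ι K 1 * ι K 1) * 1 := by noncomm_ring
    rw [(Submodule.Quotient.mk_eq_zero _).mpr (by rw [h]; exact gmem K 1 1 (hR3 K))]
    exact zero_mem _
  · exact Submodule.subset_span ⟨4, rfl⟩
  · have h : (ι K 2 * ι K 0 : FreeAlgebra K (Fin 3)) = 1 * (ι K 2 * ι K 0) * 1 := by noncomm_ring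
    rw [(Submodule.Quotient.mk_eq_zero _).mpr (by rw [h]; exact gmem K 1 1 (hR4 K))]
    exact zero_mem _
  · have h : (ι K 2 * ι K 1 - (ι K 0 * ι K 0) : FreeAlgebra K (Fin 3)) = 1 * (ι K 2 * ι K 1 - ι K 0 * ι K 0) * 1 := by noncomm_ring
    rw [(Submodule.Quotient.eq _).mpr (by rw [h]; exact gmem K 1 1 (hR2 K))]
    exact Submodule.subset_span ⟨0, rfl⟩
  · have h : (ι K 2 * ι K 2 - (ι K 1 * ι K 0) : FreeAlgebra K (Fin 3)) = 1 * (ι K 2 * ι K 2 - ι K 1 * ι K 0) * 1 := by noncomm_ring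
    rw [(Submodule.Quotient.eq _).mpr (by rw [h]; exact gmem K 1 1 (hR1 K))]
    exact Submodule.subset_span ⟨3, rfl⟩

lemma w3_core (x y z : Fin 3) :
    (Submodule.Quotient.mk (ι K x * (ι K y * ι K z)) :
      FreeAlgebra K (Fin 3) ⧸ idealSpan K 3 (Rels K)) ∈
      Submodule.span K (Set.range (v3 K)) := by
  rcases fin3 x with h|h|h <;> subst h <;> rcases fin3 y with h|h|h <;> subst h <;>
    rcases fin3 z with h|h|h <;> subst h
  · exact Submodule.subset_span ⟨0, rfl⟩
  · rw [(Submodule.Quotient.mk_eq_zero _).mpr (mz_aab K)]; exact zero_mem _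
  · exact Submodule.subset_span ⟨1, rfl⟩
  · exact Submodule.subset_span ⟨2, rfl⟩
  · rw [(Submodule.Quotient.mk_eq_zero _).mpr (mz_abb K)]; exact zero_mem _
  · exact Submodule.subset_span ⟨3, rfl⟩
  · rw [(Submodule.Quotient.mk_eq_zero _).mpr (mz_aca K)]; exact zero_mem _
  · rw [(Submodule.Quotient.eq _).mpr (rd_acb K)]; exact Submodule.subset_span ⟨0, rfl⟩
  · rw [(Submodule.Quotient.eq _).mpr (rd_acc K)]; exact Submodule.subset_span ⟨2, rfl⟩
  · rw [(Submodule.Quotient.mk_eq_zero _).mpr (mz_baa K)]; exact zero_mem _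
  · rw [(Submodule.Quotient.mk_eq_zero _).mpr (mz_bab K)]; exact zero_mem _
  · rw [(Submodule.Quotient.eq _).mpr (rd_bac K)]; exact Submodule.subset_span ⟨0, rfl⟩
  · rw [(Submodule.Quotient.mk_eq_zero _).mpr (mz_bba K)]; exact zero_mem _
  · rw [(Submodule.Quotient.mk_eq_zero _).mpr (mz_bbb K)]; exact zero_mem _
  · rw [(Submodule.Quotient.mk_eq_zero _).mpr (mz_bbc K)]; exact zero_mem _
  · rw [(Submodule.Quotient.mk_eq_zero _).mpr (mz_bca K)]; exact zero_mem _
  · rw [(Submodule.Quotient.mk_eq_zero _).mpr (mz_bcb K)]; exact zero_mem _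
  · rw [(Submodule.Quotient.mk_eq_zero _).mpr (mz_bcc K)]; exact zero_mem _
  · rw [(Submodule.Quotient.mk_eq_zero _).mpr (mz_caa K)]; exact zero_mem _
  · rw [(Submodule.Quotient.mk_eq_zero _).mpr (mz_cab K)]; exact zero_mem _
  · rw [(Submodule.Quotient.mk_eq_zero _).mpr (mz_cac K)]; exact zero_mem _
  · rw [(Submodule.Quotient.eq _).mpr (rd_cba K)]; exact Submodule.subset_span ⟨0, rfl⟩
  · rw [(Submodule.Quotient.mk_eq_zero _).mpr (mz_cbb K)]; exact zero_mem _
  · rw [(Submodule.Quotient.eq _).mpr (rd_cbc K)]; exact Submodule.subset_span ⟨1, rfl⟩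
  · rw [(Submodule.Quotient.mk_eq_zero _).mpr (mz_cca K)]; exact zero_mem _
  · rw [(Submodule.Quotient.mk_eq_zero _).mpr (mz_ccb K)]; exact zero_mem _
  · rw [(Submodule.Quotient.eq _).mpr (rd_ccc K)]; exact Submodule.subset_span ⟨0, rfl⟩

lemma w4_core (x y z w : Fin 3) :
    ι K x * (ι K y * (ι K z * ι K w)) ∈ idealSpan K 3 (Rels K) := by
  rcases fin3 y with h|h|h <;> subst h <;> rcases fin3 z with h|h|h <;> subst h <;>
    rcases fin3 w with h|h|h <;> subst h
  · exact step4 K x _ _ (by rw [sub_self]; exact zero_mem _) (xm_aaa K x)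
  · exact step4 K x _ _ (by rw [sub_zero]; exact mz_aab K) (by rw [mul_zero]; exact zero_mem _)
  · exact step4 K x _ _ (by rw [sub_self]; exact zero_mem _) (xm_aac K x)
  · exact step4 K x _ _ (by rw [sub_self]; exact zero_mem _) (xm_aba K x)
  · exact step4 K x _ _ (by rw [sub_zero]; exact mz_abb K) (by rw [mul_zero]; exact zero_mem _)
  · exact step4 K x _ _ (by rw [sub_self]; exact zero_mem _) (xm_abc K x)
  · exact step4 K x _ _ (by rw [sub_zero]; exact mz_aca K) (by rw [mul_zero]; exact zero_mem _)
  · exact step4 K x _ _ (rd_acb K) (xm_aaa K x)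
  · exact step4 K x _ _ (rd_acc K) (xm_aba K x)
  · exact step4 K x _ _ (by rw [sub_zero]; exact mz_baa K) (by rw [mul_zero]; exact zero_mem _)
  · exact step4 K x _ _ (by rw [sub_zero]; exact mz_bab K) (by rw [mul_zero]; exact zero_mem _)
  · exact step4 K x _ _ (rd_bac K) (xm_aaa K x)
  · exact step4 K x _ _ (by rw [sub_zero]; exact mz_bba K) (by rw [mul_zero]; exact zero_mem _)
  · exact step4 K x _ _ (by rw [sub_zero]; exact mz_bbb K) (by rw [mul_zero]; exact zero_mem _)
  · exact step4 K x _ _ (by rw [sub_zero]; exact mz_bbc K) (by rw [mul_zero]; exact zero_mem _)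
  · exact step4 K x _ _ (by rw [sub_zero]; exact mz_bca K) (by rw [mul_zero]; exact zero_mem _)
  · exact step4 K x _ _ (by rw [sub_zero]; exact mz_bcb K) (by rw [mul_zero]; exact zero_mem _)
  · exact step4 K x _ _ (by rw [sub_zero]; exact mz_bcc K) (by rw [mul_zero]; exact zero_mem _)
  · exact step4 K x _ _ (by rw [sub_zero]; exact mz_caa K) (by rw [mul_zero]; exact zero_mem _)
  · exact step4 K x _ _ (by rw [sub_zero]; exact mz_cab K) (by rw [mul_zero]; exact zero_mem _)
  · exact step4 K x _ _ (by rw [sub_zero]; exact mz_cac K) (by rw [mul_zero]; exact zero_mem _)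
  · exact step4 K x _ _ (rd_cba K) (xm_aaa K x)
  · exact step4 K x _ _ (by rw [sub_zero]; exact mz_cbb K) (by rw [mul_zero]; exact zero_mem _)
  · exact step4 K x _ _ (rd_cbc K) (xm_aac K x)
  · exact step4 K x _ _ (by rw [sub_zero]; exact mz_cca K) (by rw [mul_zero]; exact zero_mem _)
  · exact step4 K x _ _ (by rw [sub_zero]; exact mz_ccb K) (by rw [mul_zero]; exact zero_mem _)
  · exact step4 K x _ _ (rd_ccc K) (xm_aaa K x)

lemma high_words_mem : ∀ q : ℕ, 4 ≤ q → ∀ f : Fin q → Fin 3,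
    word K 3 f ∈ idealSpan K 3 (Rels K) := by
  intro q hq
  induction q, hq using Nat.le_induction with
  | base =>
    intro f
    rw [word4_eq]
    exact w4_core K _ _ _ _
  | succ n hn ih =>
    intro f
    rw [word_succ]
    exact mul_left_mem K _ (ih _)

/-! ### The graded components -/

lemma comp_eq_bot (q : ℕ) (hq : 4 ≤ q) : gradedComp K 3 (Rels K) q = ⊥ := by
  rw [gradedComp, Submodule.span_eq_bot]
  rintro x ⟨f, rfl⟩
  exact (Submodule.Quotient.mk_eq_zero _).mpr (high_words_mem K q hq f)

lemma comp2_eq : gradedComp K 3 (Rels K) 2 = Submodule.span K (Set.range (v2 K)) := by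
  apply le_antisymm
  · rw [gradedComp, Submodule.span_le]
    rintro x ⟨f, rfl⟩
    beta_reduce
    rw [word2_eq]
    exact w2_core K _ _
  · rw [Submodule.span_le]
    rintro x ⟨i, rfl⟩
    fin_cases i
    · refine Submodule.subset_span ⟨![0, 0], ?_⟩
      beta_reduce
      rw [word2_eq]
      rfl
    · refine Submodule.subset_span ⟨![0, 1], ?_⟩
      beta_reduce
      rw [word2_eq]
      rfl
    · refine Submodule.subset_span ⟨![0, 2], ?_⟩
      beta_reduce
      rw [word2_eq]
      rfl
    · refine Submodule.subset_span ⟨![1, 0], ?_⟩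
      beta_reduce
      rw [word2_eq]
      rfl
    · refine Submodule.subset_span ⟨![1, 2], ?_⟩
      beta_reduce
      rw [word2_eq]
      rfl

lemma comp3_eq : gradedComp K 3 (Rels K) 3 = Submodule.span K (Set.range (v3 K)) := by
  apply le_antisymm
  · rw [gradedComp, Submodule.span_le]
    rintro x ⟨f, rfl⟩
    beta_reduce
    rw [word3_eq]
    exact w3_core K _ _ _
  · rw [Submodule.span_le]
    rintro x ⟨i, rfl⟩
    fin_cases i
    · refine Submodule.subset_span ⟨![0, 0, 0], ?_⟩
      beta_reduce
      rw [word3_eq]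
      rfl
    · refine Submodule.subset_span ⟨![0, 0, 2], ?_⟩
      beta_reduce
      rw [word3_eq]
      rfl
    · refine Submodule.subset_span ⟨![0, 1, 0], ?_⟩
      beta_reduce
      rw [word3_eq]
      rfl
    · refine Submodule.subset_span ⟨![0, 1, 2], ?_⟩
      beta_reduce
      rw [word3_eq]
      rfl

lemma comp1_eq : gradedComp K 3 (Rels K) 1 = Submodule.span K (Set.range (v1 K)) := by
  apply le_antisymm
  · rw [gradedComp, Submodule.span_le]
    rintro x ⟨f, rfl⟩
    beta_reduce
    rw [word1_eq]
    rcases fin3 (f 0) with h|h|h <;> rw [h]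
    · exact Submodule.subset_span ⟨0, rfl⟩
    · exact Submodule.subset_span ⟨1, rfl⟩
    · exact Submodule.subset_span ⟨2, rfl⟩
  · rw [Submodule.span_le]
    rintro x ⟨i, rfl⟩
    fin_cases i
    · refine Submodule.subset_span ⟨![0], ?_⟩
      beta_reduce
      rw [word1_eq]
      rfl
    · refine Submodule.subset_span ⟨![1], ?_⟩
      beta_reduce
      rw [word1_eq]
      rfl
    · refine Submodule.subset_span ⟨![2], ?_⟩
      beta_reduce
      rw [word1_eq]
      rfl

/-! ### Independence -/

lemma phi_v1 : phi K ∘ v1 K = fun i => e K (![1, 2, 3] i) := by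
  funext i
  fin_cases i <;> show phi K (Submodule.Quotient.mk _) = _
  · rw [phi_mk, pim_0]; exact stA0 K
  · rw [phi_mk, pim_1]; exact stB0 K
  · rw [phi_mk, pim_2]; exact stC0 K

lemma phi_v2 : phi K ∘ v2 K = fun i => e K (![4, 5, 6, 7, 8] i) := by
  funext i
  fin_cases i <;> show phi K (Submodule.Quotient.mk _) = _ <;>
    rw [phi_mk, map_mul, Module.End.mul_apply]
  · rw [pim_0, stA0, stA1]; rfl
  · rw [pim_0, pim_1, stB0, stA2]; rfl
  · rw [pim_0, pim_2, stC0, stA3]; rfl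
  · rw [pim_0, pim_1, stA0, stB1]; rfl
  · rw [pim_1, pim_2, stC0, stB3]; rfl

lemma phi_v3 : phi K ∘ v3 K = fun i => e K (![9, 10, 11, 12] i) := by
  funext i
  fin_cases i <;> show phi K (Submodule.Quotient.mk _) = _ <;>
    rw [phi_mk, map_mul, map_mul, Module.End.mul_apply, Module.End.mul_apply]
  · rw [pim_0, stA0, stA1, stA4]; rfl
  · rw [pim_0, pim_2, stC0, stA3, stA6]; rfl
  · rw [pim_0, pim_1, stA0, stB1, stA7]; rfl
  · rw [pim_0, pim_1, pim_2, stC0, stB3, stA8]; rfl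

lemma indep1 : LinearIndependent K (v1 K) := by
  apply LinearIndependent.of_comp (phi K)
  rw [phi_v1]
  exact e_comp_indep K ![1, 2, 3] (by decide)

lemma indep2 : LinearIndependent K (v2 K) := by
  apply LinearIndependent.of_comp (phi K)
  rw [phi_v2]
  exact e_comp_indep K ![4, 5, 6, 7, 8] (by decide)

lemma indep3 : LinearIndependent K (v3 K) := by
  apply LinearIndependent.of_comp (phi K)
  rw [phi_v3]
  exact e_comp_indep K ![9, 10, 11, 12] (by decide)

/-! ### Dimensions -/

lemma dim1 : Module.finrank K (gradedComp K 3 (Rels K) 1) = 3 := by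
  rw [comp1_eq, finrank_span_eq_card (indep1 K)]
  simp

lemma dim2 : Module.finrank K (gradedComp K 3 (Rels K) 2) = 5 := by
  rw [comp2_eq, finrank_span_eq_card (indep2 K)]
  simp

lemma dim3 : Module.finrank K (gradedComp K 3 (Rels K) 3) = 4 := by
  rw [comp3_eq, finrank_span_eq_card (indep3 K)]
  simp

lemma mk_one_ne :
    (Submodule.Quotient.mk 1 : FreeAlgebra K (Fin 3) ⧸ idealSpan K 3 (Rels K)) ≠ 0 := by
  intro h
  have h2 := congrArg (phi K) h
  rw [phi_mk, map_one, map_zero, Module.End.one_apply] at h2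
  exact e_ne_zero K 0 h2

lemma dim0 : Module.finrank K (gradedComp K 3 (Rels K) 0) = 1 := by
  have h : gradedComp K 3 (Rels K) 0 =
      Submodule.span K {(Submodule.Quotient.mk 1 :
        FreeAlgebra K (Fin 3) ⧸ idealSpan K 3 (Rels K))} := by
    rw [gradedComp]
    congr 1
    have h2 : (fun f : Fin 0 → Fin 3 =>
        (Submodule.Quotient.mk (word K 3 f) :
          FreeAlgebra K (Fin 3) ⧸ idealSpan K 3 (Rels K))) =
        fun _ => Submodule.Quotient.mk 1 := by
      funext f; rw [word_zero]
    rw [h2, Set.range_const]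
  rw [h]
  exact finrank_span_singleton (mk_one_ne K)

end

end HilbertR3

open HilbertR3 in
/-- `R = K⟨a,b,c⟩/(c² − ba, cb − a², b², ca)` has Hilbert series
`1 + 3t + 5t² + 4t³` and is 4-step nilpotent. -/
theorem hilbert_R3 (K : Type*) [Field K] :
    let a : FreeAlgebra K (Fin 3) := ι K 0
    let b : FreeAlgebra K (Fin 3) := ι K 1
    let c : FreeAlgebra K (Fin 3) := ι K 2
    let rels : Set (FreeAlgebra K (Fin 3)) :=
      {c * c - b * a, c * b - a * a, b * b, c * a}
    Module.finrank K (gradedComp K 3 rels 0) = 1 ∧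
    Module.finrank K (gradedComp K 3 rels 1) = 3 ∧
    Module.finrank K (gradedComp K 3 rels 2) = 5 ∧
    Module.finrank K (gradedComp K 3 rels 3) = 4 ∧
    ∀ q : ℕ, 4 ≤ q → gradedComp K 3 rels q = ⊥ := by
  intro a b c rels
  exact ⟨dim0 K, dim1 K, dim2 K, dim3 K, fun q hq => comp_eq_bot K q hq⟩
end

section
/- Let K be a field and R = K⟨a,b,c,d⟩/(d² − ca, dc − ab, db − a², da, cd − b², c² − ba, cb − bc). Then R is 4-step nilpotent (R_4 = 0) with Hilbert series 1 + 4t + 9t² + 8t³. -/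
open FreeAlgebra

namespace HilbR4

/-! ### Integer matrices: the left regular representation of `R` on its
22-dimensional normal-form basis. -/

def tbl : Fin 4 → Fin 22 → Option (Fin 22) :=
  ![![some 1, some 11, some 12, some 5, some 6, some 18, some 17, some 20, some 19, some 21, some 18, some 19, some 20, some 14, none, none, none, none, none, none, none, none],
    ![some 2, some 9, some 10, some 8, some 7, some 15, none, some 16, none, none, none, some 16, none, some 15, none, none, none, none, none, none, none, none],
    ![some 3, some 13, some 8, some 9, some 10, none, some 21, none, none, some 15, none, none, none, some 16, none, none, none, none, none, none, none, none],
    ![some 4, none, some 11, some 12, some 13, none, none, some 17, some 18, some 19, some 20, none, none, some 21, none, none, none, none, none, none, none, none]]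

def N (x : Fin 4) : Matrix (Fin 22) (Fin 22) ℤ :=
  Matrix.of fun i j => if tbl x j = some i then 1 else 0

theorem relN0 : N 3 * N 3 = N 2 * N 0 := by decide
theorem relN1 : N 3 * N 2 = N 0 * N 1 := by decide
theorem relN2 : N 3 * N 1 = N 0 * N 0 := by decide
theorem relN3 : N 3 * N 0 = 0 := by decide
theorem relN4 : N 2 * N 3 = N 1 * N 1 := by decide
theorem relN5 : N 2 * N 2 = N 1 * N 0 := by decide
theorem relN6 : N 2 * N 1 = N 1 * N 2 := by decide

def w0f : Fin 1 → (Fin 0 → Fin 4) := ![![]]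
def idx0 : Fin 1 → Fin 22 := ![0]
def w1f : Fin 4 → (Fin 1 → Fin 4) := ![![(0:Fin 4)], ![(1:Fin 4)], ![(2:Fin 4)], ![(3:Fin 4)]]
def idx1 : Fin 4 → Fin 22 := ![1, 2, 3, 4]
def w2f : Fin 9 → (Fin 2 → Fin 4) := ![![(0:Fin 4), (2:Fin 4)], ![(0:Fin 4), (3:Fin 4)], ![(1:Fin 4), (3:Fin 4)], ![(2:Fin 4), (1:Fin 4)], ![(2:Fin 4), (2:Fin 4)], ![(2:Fin 4), (3:Fin 4)], ![(3:Fin 4), (1:Fin 4)], ![(3:Fin 4), (2:Fin 4)], ![(3:Fin 4), (3:Fin 4)]]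
def idx2 : Fin 9 → Fin 22 := ![5, 6, 7, 8, 9, 10, 11, 12, 13]
def w3f : Fin 8 → (Fin 3 → Fin 4) := ![![(0:Fin 4), (3:Fin 4), (3:Fin 4)], ![(2:Fin 4), (2:Fin 4), (2:Fin 4)], ![(2:Fin 4), (3:Fin 4), (3:Fin 4)], ![(3:Fin 4), (1:Fin 4), (3:Fin 4)], ![(3:Fin 4), (2:Fin 4), (1:Fin 4)], ![(3:Fin 4), (2:Fin 4), (2:Fin 4)], ![(3:Fin 4), (2:Fin 4), (3:Fin 4)], ![(3:Fin 4), (3:Fin 4), (3:Fin 4)]]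
def idx3 : Fin 8 → Fin 22 := ![14, 15, 16, 17, 18, 19, 20, 21]

theorem colN0 : ∀ i j : Fin 1, (((List.ofFn (w0f j)).map N).prod) (idx0 i) 0
    = if i = j then 1 else 0 := by decide
theorem colN1 : ∀ i j : Fin 4, (((List.ofFn (w1f j)).map N).prod) (idx1 i) 0
    = if i = j then 1 else 0 := by decide
theorem colN2 : ∀ i j : Fin 9, (((List.ofFn (w2f j)).map N).prod) (idx2 i) 0
    = if i = j then 1 else 0 := by decide
theorem colN3 : ∀ i j : Fin 8, (((List.ofFn (w3f j)).map N).prod) (idx3 i) 0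
    = if i = j then 1 else 0 := by decide

variable (K : Type*) [Field K]

local notation "A" => (ι K (0:Fin 4) : FreeAlgebra K (Fin 4))
local notation "B" => (ι K (1:Fin 4) : FreeAlgebra K (Fin 4))
local notation "C" => (ι K (2:Fin 4) : FreeAlgebra K (Fin 4))
local notation "D" => (ι K (3:Fin 4) : FreeAlgebra K (Fin 4))

/-- The relation set. -/
noncomputable def Rels : Set (FreeAlgebra K (Fin 4)) :=
  {D * D - C * A, D * C - A * B, D * B - A * A, D * A,
   C * D - B * B, C * C - B * A, C * B - B * C}

noncomputable abbrev I : Submodule K (FreeAlgebra K (Fin 4)) := idealSpan K 4 (Rels K)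

lemma relmem0 : D * D - C * A ∈ Rels K := Or.inl rfl
lemma relmem1 : D * C - A * B ∈ Rels K := Or.inr (Or.inl rfl)
lemma relmem2 : D * B - A * A ∈ Rels K := Or.inr (Or.inr (Or.inl rfl))
lemma relmem3 : D * A ∈ Rels K := Or.inr (Or.inr (Or.inr (Or.inl rfl)))
lemma relmem4 : C * D - B * B ∈ Rels K := Or.inr (Or.inr (Or.inr (Or.inr (Or.inl rfl))))
lemma relmem5 : C * C - B * A ∈ Rels K :=
  Or.inr (Or.inr (Or.inr (Or.inr (Or.inr (Or.inl rfl)))))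
lemma relmem6 : C * B - B * C ∈ Rels K :=
  Or.inr (Or.inr (Or.inr (Or.inr (Or.inr (Or.inr rfl)))))

lemma genI (u v r : FreeAlgebra K (Fin 4)) (hr : r ∈ Rels K) : u * r * v ∈ I K :=
  Submodule.subset_span ⟨u, v, r, hr, rfl⟩

lemma I_mul_left (x : FreeAlgebra K (Fin 4)) {y : FreeAlgebra K (Fin 4)}
    (hy : y ∈ I K) : x * y ∈ I K := by
  induction hy using Submodule.span_induction with
  | mem z hz =>
    obtain ⟨u, v, r, hr, rfl⟩ := hz
    exact Submodule.subset_span ⟨x * u, v, r, hr, by rw [← mul_assoc, ← mul_assoc]⟩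
  | zero => rw [mul_zero]; exact zero_mem _
  | add a b _ _ ha hb => rw [mul_add]; exact add_mem ha hb
  | smul t a _ ha => rw [mul_smul_comm]; exact Submodule.smul_mem _ _ ha

/-! ### Normal-form bases in each degree. -/

noncomputable def B0 : Set (FreeAlgebra K (Fin 4)) := {1}
noncomputable def B1 : Set (FreeAlgebra K (Fin 4)) := {A, B, C, D}
noncomputable def B2 : Set (FreeAlgebra K (Fin 4)) :=
  {A * C, A * D, B * D, C * B, C * C, C * D, D * B, D * C, D * D}
noncomputable def B3 : Set (FreeAlgebra K (Fin 4)) :=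
  {A * (D * D), C * (C * C), C * (D * D), D * (B * D),
   D * (C * B), D * (C * C), D * (C * D), D * (D * D)}

noncomputable def S0 : Submodule K (FreeAlgebra K (Fin 4)) := Submodule.span K (B0 K) ⊔ I K
noncomputable def S1 : Submodule K (FreeAlgebra K (Fin 4)) := Submodule.span K (B1 K) ⊔ I K
noncomputable def S2 : Submodule K (FreeAlgebra K (Fin 4)) := Submodule.span K (B2 K) ⊔ I K
noncomputable def S3 : Submodule K (FreeAlgebra K (Fin 4)) := Submodule.span K (B3 K) ⊔ I K

set_option maxHeartbeats 1000000

lemma cert2_0 : A * A ∈ S2 K := by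
  have h : A * A = (D * B) + (-((1) * (D*B - A*A) * (1))) := by noncomm_ring
  rw [h]
  exact add_mem (Submodule.mem_sup_left (Submodule.subset_span (s := B2 K) (Or.inr (Or.inr (Or.inr (Or.inr (Or.inr (Or.inr (Or.inl rfl))))))))) (Submodule.mem_sup_right (neg_mem (genI K (1) (1) _ (relmem2 K))))

lemma cert2_1 : A * B ∈ S2 K := by
  have h : A * B = (D * C) + (-((1) * (D*C - A*B) * (1))) := by noncomm_ring
  rw [h]
  exact add_mem (Submodule.mem_sup_left (Submodule.subset_span (s := B2 K) (Or.inr (Or.inr (Or.inr (Or.inr (Or.inr (Or.inr (Or.inr (Or.inl rfl)))))))))) (Submodule.mem_sup_right (neg_mem (genI K (1) (1) _ (relmem1 K))))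

lemma cert2_2 : A * C ∈ S2 K :=
  Submodule.mem_sup_left (Submodule.subset_span (s := B2 K) (Or.inl rfl))

lemma cert2_3 : A * D ∈ S2 K :=
  Submodule.mem_sup_left (Submodule.subset_span (s := B2 K) (Or.inr (Or.inl rfl)))

lemma cert2_4 : B * A ∈ S2 K := by
  have h : B * A = (C * C) + (-((1) * (C*C - B*A) * (1))) := by noncomm_ring
  rw [h]
  exact add_mem (Submodule.mem_sup_left (Submodule.subset_span (s := B2 K) (Or.inr (Or.inr (Or.inr (Or.inr (Or.inl rfl))))))) (Submodule.mem_sup_right (neg_mem (genI K (1) (1) _ (relmem5 K))))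

lemma cert2_5 : B * B ∈ S2 K := by
  have h : B * B = (C * D) + (-((1) * (C*D - B*B) * (1))) := by noncomm_ring
  rw [h]
  exact add_mem (Submodule.mem_sup_left (Submodule.subset_span (s := B2 K) (Or.inr (Or.inr (Or.inr (Or.inr (Or.inr (Or.inl rfl)))))))) (Submodule.mem_sup_right (neg_mem (genI K (1) (1) _ (relmem4 K))))

lemma cert2_6 : B * C ∈ S2 K := by
  have h : B * C = (C * B) + (-((1) * (C*B - B*C) * (1))) := by noncomm_ring
  rw [h]
  exact add_mem (Submodule.mem_sup_left (Submodule.subset_span (s := B2 K) (Or.inr (Or.inr (Or.inr (Or.inl rfl)))))) (Submodule.mem_sup_right (neg_mem (genI K (1) (1) _ (relmem6 K))))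

lemma cert2_7 : B * D ∈ S2 K :=
  Submodule.mem_sup_left (Submodule.subset_span (s := B2 K) (Or.inr (Or.inr (Or.inl rfl))))

lemma cert2_8 : C * A ∈ S2 K := by
  have h : C * A = (D * D) + (-((1) * (D*D - C*A) * (1))) := by noncomm_ring
  rw [h]
  exact add_mem (Submodule.mem_sup_left (Submodule.subset_span (s := B2 K) (Or.inr (Or.inr (Or.inr (Or.inr (Or.inr (Or.inr (Or.inr (Or.inr rfl)))))))))) (Submodule.mem_sup_right (neg_mem (genI K (1) (1) _ (relmem0 K))))

lemma cert2_9 : C * B ∈ S2 K :=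
  Submodule.mem_sup_left (Submodule.subset_span (s := B2 K) (Or.inr (Or.inr (Or.inr (Or.inl rfl)))))

lemma cert2_10 : C * C ∈ S2 K :=
  Submodule.mem_sup_left (Submodule.subset_span (s := B2 K) (Or.inr (Or.inr (Or.inr (Or.inr (Or.inl rfl))))))

lemma cert2_11 : C * D ∈ S2 K :=
  Submodule.mem_sup_left (Submodule.subset_span (s := B2 K) (Or.inr (Or.inr (Or.inr (Or.inr (Or.inr (Or.inl rfl)))))))

lemma cert2_12 : D * A ∈ S2 K := by
  have h : D * A = ((0 : FreeAlgebra K (Fin 4))) + ((1) * (D*A) * (1)) := by noncomm_ring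
  rw [h]
  exact add_mem (Submodule.mem_sup_left (zero_mem _)) (Submodule.mem_sup_right (genI K (1) (1) _ (relmem3 K)))

lemma cert2_13 : D * B ∈ S2 K :=
  Submodule.mem_sup_left (Submodule.subset_span (s := B2 K) (Or.inr (Or.inr (Or.inr (Or.inr (Or.inr (Or.inr (Or.inl rfl))))))))

lemma cert2_14 : D * C ∈ S2 K :=
  Submodule.mem_sup_left (Submodule.subset_span (s := B2 K) (Or.inr (Or.inr (Or.inr (Or.inr (Or.inr (Or.inr (Or.inr (Or.inl rfl)))))))))

lemma cert2_15 : D * D ∈ S2 K :=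
  Submodule.mem_sup_left (Submodule.subset_span (s := B2 K) (Or.inr (Or.inr (Or.inr (Or.inr (Or.inr (Or.inr (Or.inr (Or.inr rfl)))))))))

lemma cert3_0 : A * (A * C) ∈ S3 K := by
  have h : A * (A * C) = (D * (C * B)) + ((-((1) * (D*B - A*A) * (C)) + -((D) * (C*B - B*C) * (1)))) := by noncomm_ring
  rw [h]
  exact add_mem (Submodule.mem_sup_left (Submodule.subset_span (s := B3 K) (Or.inr (Or.inr (Or.inr (Or.inr (Or.inl rfl))))))) (Submodule.mem_sup_right (add_mem (neg_mem (genI K (1) (C) _ (relmem2 K))) (neg_mem (genI K (D) (1) _ (relmem6 K)))))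

lemma cert3_1 : A * (A * D) ∈ S3 K := by
  have h : A * (A * D) = (D * (B * D)) + (-((1) * (D*B - A*A) * (D))) := by noncomm_ring
  rw [h]
  exact add_mem (Submodule.mem_sup_left (Submodule.subset_span (s := B3 K) (Or.inr (Or.inr (Or.inr (Or.inl rfl)))))) (Submodule.mem_sup_right (neg_mem (genI K (1) (D) _ (relmem2 K))))

lemma cert3_2 : A * (B * D) ∈ S3 K := by
  have h : A * (B * D) = (D * (C * D)) + (-((1) * (D*C - A*B) * (D))) := by noncomm_ring
  rw [h]
  exact add_mem (Submodule.mem_sup_left (Submodule.subset_span (s := B3 K) (Or.inr (Or.inr (Or.inr (Or.inr (Or.inr (Or.inr (Or.inl rfl))))))))) (Submodule.mem_sup_right (neg_mem (genI K (1) (D) _ (relmem1 K))))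

lemma cert3_3 : A * (C * B) ∈ S3 K := by
  have h : A * (C * B) = (D * (C * C)) + ((-((1) * (D*C - A*B) * (C)) + (A) * (C*B - B*C) * (1))) := by noncomm_ring
  rw [h]
  exact add_mem (Submodule.mem_sup_left (Submodule.subset_span (s := B3 K) (Or.inr (Or.inr (Or.inr (Or.inr (Or.inr (Or.inl rfl)))))))) (Submodule.mem_sup_right (add_mem (neg_mem (genI K (1) (C) _ (relmem1 K))) (genI K (A) (1) _ (relmem6 K))))

lemma cert3_4 : A * (C * C) ∈ S3 K := by
  have h : A * (C * C) = (D * (D * D)) + (((-((D) * (D*D - C*A) * (1)) + -((1) * (D*C - A*B) * (A))) + (A) * (C*C - B*A) * (1))) := by noncomm_ring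
  rw [h]
  exact add_mem (Submodule.mem_sup_left (Submodule.subset_span (s := B3 K) (Or.inr (Or.inr (Or.inr (Or.inr (Or.inr (Or.inr (Or.inr rfl))))))))) (Submodule.mem_sup_right (add_mem (add_mem (neg_mem (genI K (D) (1) _ (relmem0 K))) (neg_mem (genI K (1) (A) _ (relmem1 K)))) (genI K (A) (1) _ (relmem5 K))))

lemma cert3_5 : A * (C * D) ∈ S3 K := by
  have h : A * (C * D) = (D * (C * B)) + ((-((1) * (D*C - A*B) * (B)) + (A) * (C*D - B*B) * (1))) := by noncomm_ring
  rw [h]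
  exact add_mem (Submodule.mem_sup_left (Submodule.subset_span (s := B3 K) (Or.inr (Or.inr (Or.inr (Or.inr (Or.inl rfl))))))) (Submodule.mem_sup_right (add_mem (neg_mem (genI K (1) (B) _ (relmem1 K))) (genI K (A) (1) _ (relmem4 K))))

lemma cert3_6 : A * (D * B) ∈ S3 K := by
  have h : A * (D * B) = (D * (C * C)) + (((-((1) * (D*B - A*A) * (A)) + (A) * (D*B - A*A) * (1)) + -((D) * (C*C - B*A) * (1)))) := by noncomm_ring
  rw [h]
  exact add_mem (Submodule.mem_sup_left (Submodule.subset_span (s := B3 K) (Or.inr (Or.inr (Or.inr (Or.inr (Or.inr (Or.inl rfl)))))))) (Submodule.mem_sup_right (add_mem (add_mem (neg_mem (genI K (1) (A) _ (relmem2 K))) (genI K (A) (1) _ (relmem2 K))) (neg_mem (genI K (D) (1) _ (relmem5 K)))))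

lemma cert3_7 : A * (D * C) ∈ S3 K := by
  have h : A * (D * C) = (D * (C * D)) + ((((A) * (D*C - A*B) * (1) + -((1) * (D*B - A*A) * (B))) + -((D) * (C*D - B*B) * (1)))) := by noncomm_ring
  rw [h]
  exact add_mem (Submodule.mem_sup_left (Submodule.subset_span (s := B3 K) (Or.inr (Or.inr (Or.inr (Or.inr (Or.inr (Or.inr (Or.inl rfl))))))))) (Submodule.mem_sup_right (add_mem (add_mem (genI K (A) (1) _ (relmem1 K)) (neg_mem (genI K (1) (B) _ (relmem2 K)))) (neg_mem (genI K (D) (1) _ (relmem4 K)))))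

lemma cert3_8 : A * (D * D) ∈ S3 K :=
  Submodule.mem_sup_left (Submodule.subset_span (s := B3 K) (Or.inl rfl))

lemma cert3_9 : B * (A * C) ∈ S3 K := by
  have h : B * (A * C) = (C * (C * C)) + (-((1) * (C*C - B*A) * (C))) := by noncomm_ring
  rw [h]
  exact add_mem (Submodule.mem_sup_left (Submodule.subset_span (s := B3 K) (Or.inr (Or.inl rfl)))) (Submodule.mem_sup_right (neg_mem (genI K (1) (C) _ (relmem5 K))))

lemma cert3_10 : B * (A * D) ∈ S3 K := by
  have h : B * (A * D) = ((0 : FreeAlgebra K (Fin 4))) + (((((((((-((1) * (D*D - C*A) * (B)) + (C) * (D*C - A*B) * (1)) + (D) * (D*B - A*A) * (1)) + (1) * (D*A) * (A)) + -((1) * (C*D - B*B) * (C))) + (C) * (C*D - B*B) * (1)) + -((1) * (C*C - B*A) * (D))) + (1) * (C*B - B*C) * (B)) + (B) * (C*B - B*C) * (1))) := by noncomm_ring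
  rw [h]
  exact add_mem (Submodule.mem_sup_left (zero_mem _)) (Submodule.mem_sup_right (add_mem (add_mem (add_mem (add_mem (add_mem (add_mem (add_mem (add_mem (neg_mem (genI K (1) (B) _ (relmem0 K))) (genI K (C) (1) _ (relmem1 K))) (genI K (D) (1) _ (relmem2 K))) (genI K (1) (A) _ (relmem3 K))) (neg_mem (genI K (1) (C) _ (relmem4 K)))) (genI K (C) (1) _ (relmem4 K))) (neg_mem (genI K (1) (D) _ (relmem5 K)))) (genI K (1) (B) _ (relmem6 K))) (genI K (B) (1) _ (relmem6 K))))

lemma cert3_11 : B * (B * D) ∈ S3 K := by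
  have h : B * (B * D) = (C * (D * D)) + (-((1) * (C*D - B*B) * (D))) := by noncomm_ring
  rw [h]
  exact add_mem (Submodule.mem_sup_left (Submodule.subset_span (s := B3 K) (Or.inr (Or.inr (Or.inl rfl))))) (Submodule.mem_sup_right (neg_mem (genI K (1) (D) _ (relmem4 K))))

lemma cert3_12 : B * (C * B) ∈ S3 K := by
  have h : B * (C * B) = ((0 : FreeAlgebra K (Fin 4))) + ((((((-((1) * (D*D - C*A) * (B)) + (C) * (D*C - A*B) * (1)) + (D) * (D*B - A*A) * (1)) + (1) * (D*A) * (A)) + -((1) * (C*D - B*B) * (C))) + (B) * (C*B - B*C) * (1))) := by noncomm_ring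
  rw [h]
  exact add_mem (Submodule.mem_sup_left (zero_mem _)) (Submodule.mem_sup_right (add_mem (add_mem (add_mem (add_mem (add_mem (neg_mem (genI K (1) (B) _ (relmem0 K))) (genI K (C) (1) _ (relmem1 K))) (genI K (D) (1) _ (relmem2 K))) (genI K (1) (A) _ (relmem3 K))) (neg_mem (genI K (1) (C) _ (relmem4 K)))) (genI K (B) (1) _ (relmem6 K))))

lemma cert3_13 : B * (C * C) ∈ S3 K := by
  have h : B * (C * C) = ((0 : FreeAlgebra K (Fin 4))) + ((((C) * (D*A) * (1) + -((1) * (C*D - B*B) * (A))) + (B) * (C*C - B*A) * (1))) := by noncomm_ring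
  rw [h]
  exact add_mem (Submodule.mem_sup_left (zero_mem _)) (Submodule.mem_sup_right (add_mem (add_mem (genI K (C) (1) _ (relmem3 K)) (neg_mem (genI K (1) (A) _ (relmem4 K)))) (genI K (B) (1) _ (relmem5 K))))

lemma cert3_14 : B * (C * D) ∈ S3 K := by
  have h : B * (C * D) = ((0 : FreeAlgebra K (Fin 4))) + (((((-((1) * (D*D - C*A) * (A)) + (C) * (D*B - A*A) * (1)) + (D) * (D*A) * (1)) + -((1) * (C*D - B*B) * (B))) + (B) * (C*D - B*B) * (1))) := by noncomm_ring
  rw [h]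
  exact add_mem (Submodule.mem_sup_left (zero_mem _)) (Submodule.mem_sup_right (add_mem (add_mem (add_mem (add_mem (neg_mem (genI K (1) (A) _ (relmem0 K))) (genI K (C) (1) _ (relmem2 K))) (genI K (D) (1) _ (relmem3 K))) (neg_mem (genI K (1) (B) _ (relmem4 K)))) (genI K (B) (1) _ (relmem4 K))))

lemma cert3_15 : B * (D * B) ∈ S3 K := by
  have h : B * (D * B) = (C * (D * D)) + (((-((C) * (D*D - C*A) * (1)) + (B) * (D*B - A*A) * (1)) + -((1) * (C*C - B*A) * (A)))) := by noncomm_ring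
  rw [h]
  exact add_mem (Submodule.mem_sup_left (Submodule.subset_span (s := B3 K) (Or.inr (Or.inr (Or.inl rfl))))) (Submodule.mem_sup_right (add_mem (add_mem (neg_mem (genI K (C) (1) _ (relmem0 K))) (genI K (B) (1) _ (relmem2 K))) (neg_mem (genI K (1) (A) _ (relmem5 K)))))

lemma cert3_16 : B * (D * C) ∈ S3 K := by
  have h : B * (D * C) = ((0 : FreeAlgebra K (Fin 4))) + ((((((((B) * (D*C - A*B) * (1) + (C) * (D*A) * (1)) + -((1) * (C*D - B*B) * (A))) + -((1) * (C*C - B*A) * (B))) + (B) * (C*C - B*A) * (1)) + (1) * (C*B - B*C) * (C)) + (C) * (C*B - B*C) * (1))) := by noncomm_ring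
  rw [h]
  exact add_mem (Submodule.mem_sup_left (zero_mem _)) (Submodule.mem_sup_right (add_mem (add_mem (add_mem (add_mem (add_mem (add_mem (genI K (B) (1) _ (relmem1 K)) (genI K (C) (1) _ (relmem3 K))) (neg_mem (genI K (1) (A) _ (relmem4 K)))) (neg_mem (genI K (1) (B) _ (relmem5 K)))) (genI K (B) (1) _ (relmem5 K))) (genI K (1) (C) _ (relmem6 K))) (genI K (C) (1) _ (relmem6 K))))

lemma cert3_17 : B * (D * D) ∈ S3 K := by
  have h : B * (D * D) = (C * (C * C)) + ((((B) * (D*D - C*A) * (1) + -((C) * (C*C - B*A) * (1))) + -((1) * (C*B - B*C) * (A)))) := by noncomm_ring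
  rw [h]
  exact add_mem (Submodule.mem_sup_left (Submodule.subset_span (s := B3 K) (Or.inr (Or.inl rfl)))) (Submodule.mem_sup_right (add_mem (add_mem (genI K (B) (1) _ (relmem0 K)) (neg_mem (genI K (C) (1) _ (relmem5 K)))) (neg_mem (genI K (1) (A) _ (relmem6 K)))))

lemma cert3_18 : C * (A * C) ∈ S3 K := by
  have h : C * (A * C) = ((0 : FreeAlgebra K (Fin 4))) + (((-((1) * (D*D - C*A) * (C)) + (D) * (D*C - A*B) * (1)) + (1) * (D*A) * (B))) := by noncomm_ring
  rw [h]
  exact add_mem (Submodule.mem_sup_left (zero_mem _)) (Submodule.mem_sup_right (add_mem (add_mem (neg_mem (genI K (1) (C) _ (relmem0 K))) (genI K (D) (1) _ (relmem1 K))) (genI K (1) (B) _ (relmem3 K))))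

lemma cert3_19 : C * (A * D) ∈ S3 K := by
  have h : C * (A * D) = (D * (D * D)) + (-((1) * (D*D - C*A) * (D))) := by noncomm_ring
  rw [h]
  exact add_mem (Submodule.mem_sup_left (Submodule.subset_span (s := B3 K) (Or.inr (Or.inr (Or.inr (Or.inr (Or.inr (Or.inr (Or.inr rfl))))))))) (Submodule.mem_sup_right (neg_mem (genI K (1) (D) _ (relmem0 K))))

lemma cert3_20 : C * (B * D) ∈ S3 K := by
  have h : C * (B * D) = ((0 : FreeAlgebra K (Fin 4))) + ((((((-((1) * (D*D - C*A) * (A)) + (C) * (D*B - A*A) * (1)) + (D) * (D*A) * (1)) + -((1) * (C*D - B*B) * (B))) + (B) * (C*D - B*B) * (1)) + (1) * (C*B - B*C) * (D))) := by noncomm_ring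
  rw [h]
  exact add_mem (Submodule.mem_sup_left (zero_mem _)) (Submodule.mem_sup_right (add_mem (add_mem (add_mem (add_mem (add_mem (neg_mem (genI K (1) (A) _ (relmem0 K))) (genI K (C) (1) _ (relmem2 K))) (genI K (D) (1) _ (relmem3 K))) (neg_mem (genI K (1) (B) _ (relmem4 K)))) (genI K (B) (1) _ (relmem4 K))) (genI K (1) (D) _ (relmem6 K))))

lemma cert3_21 : C * (C * B) ∈ S3 K := by
  have h : C * (C * B) = ((0 : FreeAlgebra K (Fin 4))) + ((((((C) * (D*A) * (1) + -((1) * (C*D - B*B) * (A))) + (B) * (C*C - B*A) * (1)) + (1) * (C*B - B*C) * (C)) + (C) * (C*B - B*C) * (1))) := by noncomm_ring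
  rw [h]
  exact add_mem (Submodule.mem_sup_left (zero_mem _)) (Submodule.mem_sup_right (add_mem (add_mem (add_mem (add_mem (genI K (C) (1) _ (relmem3 K)) (neg_mem (genI K (1) (A) _ (relmem4 K)))) (genI K (B) (1) _ (relmem5 K))) (genI K (1) (C) _ (relmem6 K))) (genI K (C) (1) _ (relmem6 K))))

lemma cert3_22 : C * (C * C) ∈ S3 K :=
  Submodule.mem_sup_left (Submodule.subset_span (s := B3 K) (Or.inr (Or.inl rfl)))

lemma cert3_23 : C * (C * D) ∈ S3 K := by
  have h : C * (C * D) = ((0 : FreeAlgebra K (Fin 4))) + ((((((((-((1) * (D*D - C*A) * (B)) + (C) * (D*C - A*B) * (1)) + (D) * (D*B - A*A) * (1)) + (1) * (D*A) * (A)) + -((1) * (C*D - B*B) * (C))) + (C) * (C*D - B*B) * (1)) + (1) * (C*B - B*C) * (B)) + (B) * (C*B - B*C) * (1))) := by noncomm_ring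
  rw [h]
  exact add_mem (Submodule.mem_sup_left (zero_mem _)) (Submodule.mem_sup_right (add_mem (add_mem (add_mem (add_mem (add_mem (add_mem (add_mem (neg_mem (genI K (1) (B) _ (relmem0 K))) (genI K (C) (1) _ (relmem1 K))) (genI K (D) (1) _ (relmem2 K))) (genI K (1) (A) _ (relmem3 K))) (neg_mem (genI K (1) (C) _ (relmem4 K)))) (genI K (C) (1) _ (relmem4 K))) (genI K (1) (B) _ (relmem6 K))) (genI K (B) (1) _ (relmem6 K))))

lemma cert3_24 : C * (D * B) ∈ S3 K := by
  have h : C * (D * B) = ((0 : FreeAlgebra K (Fin 4))) + (((-((1) * (D*D - C*A) * (A)) + (C) * (D*B - A*A) * (1)) + (D) * (D*A) * (1))) := by noncomm_ring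
  rw [h]
  exact add_mem (Submodule.mem_sup_left (zero_mem _)) (Submodule.mem_sup_right (add_mem (add_mem (neg_mem (genI K (1) (A) _ (relmem0 K))) (genI K (C) (1) _ (relmem2 K))) (genI K (D) (1) _ (relmem3 K))))

lemma cert3_25 : C * (D * C) ∈ S3 K := by
  have h : C * (D * C) = ((0 : FreeAlgebra K (Fin 4))) + ((((-((1) * (D*D - C*A) * (B)) + (C) * (D*C - A*B) * (1)) + (D) * (D*B - A*A) * (1)) + (1) * (D*A) * (A))) := by noncomm_ring
  rw [h]
  exact add_mem (Submodule.mem_sup_left (zero_mem _)) (Submodule.mem_sup_right (add_mem (add_mem (add_mem (neg_mem (genI K (1) (B) _ (relmem0 K))) (genI K (C) (1) _ (relmem1 K))) (genI K (D) (1) _ (relmem2 K))) (genI K (1) (A) _ (relmem3 K))))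

lemma cert3_26 : C * (D * D) ∈ S3 K :=
  Submodule.mem_sup_left (Submodule.subset_span (s := B3 K) (Or.inr (Or.inr (Or.inl rfl))))

lemma cert3_27 : D * (A * C) ∈ S3 K := by
  have h : D * (A * C) = ((0 : FreeAlgebra K (Fin 4))) + ((1) * (D*A) * (C)) := by noncomm_ring
  rw [h]
  exact add_mem (Submodule.mem_sup_left (zero_mem _)) (Submodule.mem_sup_right (genI K (1) (C) _ (relmem3 K)))

lemma cert3_28 : D * (A * D) ∈ S3 K := by
  have h : D * (A * D) = ((0 : FreeAlgebra K (Fin 4))) + ((1) * (D*A) * (D)) := by noncomm_ring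
  rw [h]
  exact add_mem (Submodule.mem_sup_left (zero_mem _)) (Submodule.mem_sup_right (genI K (1) (D) _ (relmem3 K)))

lemma cert3_29 : D * (B * D) ∈ S3 K :=
  Submodule.mem_sup_left (Submodule.subset_span (s := B3 K) (Or.inr (Or.inr (Or.inr (Or.inl rfl)))))

lemma cert3_30 : D * (C * B) ∈ S3 K :=
  Submodule.mem_sup_left (Submodule.subset_span (s := B3 K) (Or.inr (Or.inr (Or.inr (Or.inr (Or.inl rfl))))))

lemma cert3_31 : D * (C * C) ∈ S3 K :=
  Submodule.mem_sup_left (Submodule.subset_span (s := B3 K) (Or.inr (Or.inr (Or.inr (Or.inr (Or.inr (Or.inl rfl)))))))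

lemma cert3_32 : D * (C * D) ∈ S3 K :=
  Submodule.mem_sup_left (Submodule.subset_span (s := B3 K) (Or.inr (Or.inr (Or.inr (Or.inr (Or.inr (Or.inr (Or.inl rfl))))))))

lemma cert3_33 : D * (D * B) ∈ S3 K := by
  have h : D * (D * B) = ((0 : FreeAlgebra K (Fin 4))) + (((D) * (D*B - A*A) * (1) + (1) * (D*A) * (A))) := by noncomm_ring
  rw [h]
  exact add_mem (Submodule.mem_sup_left (zero_mem _)) (Submodule.mem_sup_right (add_mem (genI K (D) (1) _ (relmem2 K)) (genI K (1) (A) _ (relmem3 K))))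

lemma cert3_34 : D * (D * C) ∈ S3 K := by
  have h : D * (D * C) = ((0 : FreeAlgebra K (Fin 4))) + (((D) * (D*C - A*B) * (1) + (1) * (D*A) * (B))) := by noncomm_ring
  rw [h]
  exact add_mem (Submodule.mem_sup_left (zero_mem _)) (Submodule.mem_sup_right (add_mem (genI K (D) (1) _ (relmem1 K)) (genI K (1) (B) _ (relmem3 K))))

lemma cert3_35 : D * (D * D) ∈ S3 K :=
  Submodule.mem_sup_left (Submodule.subset_span (s := B3 K) (Or.inr (Or.inr (Or.inr (Or.inr (Or.inr (Or.inr (Or.inr rfl))))))))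

lemma cert4_0 : A * (A * (D * D)) ∈ I K := by
  have h : A * (A * (D * D)) = ((((((A * A) * (D*D - C*A) * (1) + (1) * (D*C - A*B) * (B * A)) + -((1) * (D*B - A*A) * (C * A))) + (A * C) * (D*A) * (1)) + -((A) * (C*D - B*B) * (A))) + -((D) * (C*B - B*C) * (A))) := by noncomm_ring
  rw [h]
  exact add_mem (add_mem (add_mem (add_mem (add_mem (genI K (A * A) (1) _ (relmem0 K)) (genI K (1) (B * A) _ (relmem1 K))) (neg_mem (genI K (1) (C * A) _ (relmem2 K)))) (genI K (A * C) (1) _ (relmem3 K))) (neg_mem (genI K (A) (A) _ (relmem4 K)))) (neg_mem (genI K (D) (A) _ (relmem6 K)))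

lemma cert4_1 : A * (C * (C * C)) ∈ I K := by
  have h : A * (C * (C * C)) = (((((((((((1) * (D*D - C*A) * (D * C) + -((B) * (D*D - C*A) * (A))) + -((D) * (D*D - C*A) * (C))) + -((1) * (D*C - A*B) * (A * C))) + (C * A) * (D*C - A*B) * (1)) + -((C) * (D*B - A*A) * (B))) + (B * C) * (D*B - A*A) * (1)) + (B * D) * (D*A) * (1)) + (1) * (C*D - B*B) * (B * B)) + -((B) * (C*D - B*B) * (B))) + (A) * (C*C - B*A) * (C)) := by noncomm_ring
  rw [h]
  exact add_mem (add_mem (add_mem (add_mem (add_mem (add_mem (add_mem (add_mem (add_mem (add_mem (genI K (1) (D * C) _ (relmem0 K)) (neg_mem (genI K (B) (A) _ (relmem0 K)))) (neg_mem (genI K (D) (C) _ (relmem0 K)))) (neg_mem (genI K (1) (A * C) _ (relmem1 K)))) (genI K (C * A) (1) _ (relmem1 K))) (neg_mem (genI K (C) (B) _ (relmem2 K)))) (genI K (B * C) (1) _ (relmem2 K))) (genI K (B * D) (1) _ (relmem3 K))) (genI K (1) (B * B) _ (relmem4 K))) (neg_mem (genI K (B) (B) _ (relmem4 K)))) (genI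 K (A) (C) _ (relmem5 K))

lemma cert4_2 : A * (C * (D * D)) ∈ I K := by
  have h : A * (C * (D * D)) = ((((-((D) * (D*D - C*A) * (A)) + (A * C) * (D*D - C*A) * (1)) + -((1) * (D*C - A*B) * (A * A))) + (D * D) * (D*A) * (1)) + (A) * (C*C - B*A) * (A)) := by noncomm_ring
  rw [h]
  exact add_mem (add_mem (add_mem (add_mem (neg_mem (genI K (D) (A) _ (relmem0 K))) (genI K (A * C) (1) _ (relmem0 K))) (neg_mem (genI K (1) (A * A) _ (relmem1 K)))) (genI K (D * D) (1) _ (relmem3 K))) (genI K (A) (A) _ (relmem5 K))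

lemma cert4_3 : A * (D * (B * D)) ∈ I K := by
  have h : A * (D * (B * D)) = ((((((((-((A) * (D*D - C*A) * (A)) + (1) * (D*C - A*B) * (B * B)) + -((1) * (D*B - A*A) * (A * D))) + (A) * (D*B - A*A) * (D)) + (A * C) * (D*B - A*A) * (1)) + (A * D) * (D*A) * (1)) + -((A) * (C*D - B*B) * (B))) + (D * C) * (C*D - B*B) * (1)) + -((D) * (C*C - B*A) * (D))) := by noncomm_ring
  rw [h]
  exact add_mem (add_mem (add_mem (add_mem (add_mem (add_mem (add_mem (add_mem (neg_mem (genI K (A) (A) _ (relmem0 K))) (genI K (1) (B * B) _ (relmem1 K))) (neg_mem (genI K (1) (A * D) _ (relmem2 K)))) (genI K (A) (D) _ (relmem2 K))) (genI K (A * C) (1) _ (relmem2 K))) (genI K (A * D) (1) _ (relmem3 K))) (neg_mem (genI K (A) (B) _ (relmem4 K)))) (genI K (D * C) (1) _ (relmem4 K))) (neg_mem (genI K (D) (D) _ (relmem5 K)))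

lemma cert4_4 : A * (D * (C * B)) ∈ I K := by
  have h : A * (D * (C * B)) = (((((-((D) * (D*D - C*A) * (A)) + (A) * (D*C - A*B) * (B)) + -((1) * (D*B - A*A) * (B * B))) + (D * C) * (D*B - A*A) * (1)) + (D * D) * (D*A) * (1)) + -((D) * (C*D - B*B) * (B))) := by noncomm_ring
  rw [h]
  exact add_mem (add_mem (add_mem (add_mem (add_mem (neg_mem (genI K (D) (A) _ (relmem0 K))) (genI K (A) (B) _ (relmem1 K))) (neg_mem (genI K (1) (B * B) _ (relmem2 K)))) (genI K (D * C) (1) _ (relmem2 K))) (genI K (D * D) (1) _ (relmem3 K))) (neg_mem (genI K (D) (B) _ (relmem4 K)))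

lemma cert4_5 : A * (D * (C * C)) ∈ I K := by
  have h : A * (D * (C * C)) = ((((((((-((1) * (D*D - C*A) * (A * A)) + (1) * (D*D - C*A) * (D * B)) + -((D) * (D*D - C*A) * (B))) + (A) * (D*C - A*B) * (C)) + (D * C) * (D*C - A*B) * (1)) + -((1) * (D*B - A*A) * (B * C))) + (C * A) * (D*B - A*A) * (1)) + (D) * (D*A) * (A)) + -((D) * (C*D - B*B) * (C))) := by noncomm_ring
  rw [h]
  exact add_mem (add_mem (add_mem (add_mem (add_mem (add_mem (add_mem (add_mem (neg_mem (genI K (1) (A * A) _ (relmem0 K))) (genI K (1) (D * B) _ (relmem0 K))) (neg_mem (genI K (D) (B) _ (relmem0 K)))) (genI K (A) (C) _ (relmem1 K))) (genI K (D * C) (1) _ (relmem1 K))) (neg_mem (genI K (1) (B * C) _ (relmem2 K)))) (genI K (C * A) (1) _ (relmem2 K))) (genI K (D) (A) _ (relmem3 K))) (neg_mem (genI K (D) (C) _ (relmem4 K)))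

lemma cert4_6 : A * (D * (C * D)) ∈ I K := by
  have h : A * (D * (C * D)) = ((((((((((((((((-((1) * (D*D - C*A) * (A * A)) + (1) * (D*D - C*A) * (D * B)) + -((D) * (D*D - C*A) * (B))) + (D * C) * (D*D - C*A) * (1)) + (A) * (D*C - A*B) * (C)) + (A) * (D*C - A*B) * (D)) + (D * C) * (D*C - A*B) * (1)) + (1) * (D*B - A*A) * (A * A)) + -((1) * (D*B - A*A) * (B * C))) + -((1) * (D*B - A*A) * (B * D))) + -((A) * (D*B - A*A) * (A))) + (C * A) * (D*B - A*A) * (1)) + (D) * (D*A) * (A)) + -((D) * (C*D - B*B) * (C))) + -((D) * (C*D - B*B) * (D))) + (D) * (C*C - B*A) * (A)) + -((A * D) * (C*C - B*A) * (1))) := by noncomm_ring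
  rw [h]
  exact add_mem (add_mem (add_mem (add_mem (add_mem (add_mem (add_mem (add_mem (add_mem (add_mem (add_mem (add_mem (add_mem (add_mem (add_mem (add_mem (neg_mem (genI K (1) (A * A) _ (relmem0 K))) (genI K (1) (D * B) _ (relmem0 K))) (neg_mem (genI K (D) (B) _ (relmem0 K)))) (genI K (D * C) (1) _ (relmem0 K))) (genI K (A) (C) _ (relmem1 K))) (genI K (A) (D) _ (relmem1 K))) (genI K (D * C) (1) _ (relmem1 K))) (genI K (1) (A * A) _ (relmem2 K))) (neg_mem (genI K (1) (B * C) _ (relmem2 K)))) (neg_mem (genI K (1) (B * D) _ (relmem2 K)))) (neg_mem (genI K (A) (A) _ (relmem2 K)))) (genI K (C * A) (1) _ (relmem2 K))) (genI K (D) (A) _ (relmem3 K))) (neg_mem (genI K (D) (C) _ (relmem4 K)))) (neg_mem (genI K (D) (D) _ (relmem4 K)))) (genI K (D) (A) _ (relmem5 K))) (neg_mem (genI K (A * D) (1) _ (relmem5 K)))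

lemma cert4_7 : A * (D * (D * D)) ∈ I K := by
  have h : A * (D * (D * D)) = ((((((A * D) * (D*D - C*A) * (1) + (1) * (D*C - A*B) * (D * A)) + (A) * (D*C - A*B) * (A)) + -((1) * (D*B - A*A) * (B * A))) + (A * B) * (D*A) * (1)) + -((D) * (C*D - B*B) * (A))) := by noncomm_ring
  rw [h]
  exact add_mem (add_mem (add_mem (add_mem (add_mem (genI K (A * D) (1) _ (relmem0 K)) (genI K (1) (D * A) _ (relmem1 K))) (genI K (A) (A) _ (relmem1 K))) (neg_mem (genI K (1) (B * A) _ (relmem2 K)))) (genI K (A * B) (1) _ (relmem3 K))) (neg_mem (genI K (D) (A) _ (relmem4 K)))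

lemma cert4_8 : B * (A * (D * D)) ∈ I K := by
  have h : B * (A * (D * D)) = (((((-((B) * (D*D - C*A) * (A)) + (C * C) * (D*D - C*A) * (1)) + (B * D) * (D*A) * (1)) + -((1) * (C*C - B*A) * (D * D))) + (C) * (C*C - B*A) * (A)) + (1) * (C*B - B*C) * (A * A)) := by noncomm_ring
  rw [h]
  exact add_mem (add_mem (add_mem (add_mem (add_mem (neg_mem (genI K (B) (A) _ (relmem0 K))) (genI K (C * C) (1) _ (relmem0 K))) (genI K (B * D) (1) _ (relmem3 K))) (neg_mem (genI K (1) (D * D) _ (relmem5 K)))) (genI K (C) (A) _ (relmem5 K))) (genI K (1) (A * A) _ (relmem6 K))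

lemma cert4_9 : B * (C * (C * C)) ∈ I K := by
  have h : B * (C * (C * C)) = (((C) * (D*A) * (C) + -((1) * (C*D - B*B) * (A * C))) + (B) * (C*C - B*A) * (C)) := by noncomm_ring
  rw [h]
  exact add_mem (add_mem (genI K (C) (C) _ (relmem3 K)) (neg_mem (genI K (1) (A * C) _ (relmem4 K)))) (genI K (B) (C) _ (relmem5 K))

lemma cert4_10 : B * (C * (D * D)) ∈ I K := by
  have h : B * (C * (D * D)) = ((((-((1) * (D*D - C*A) * (A * D)) + (C) * (D*B - A*A) * (D)) + (D) * (D*A) * (D)) + -((1) * (C*D - B*B) * (B * D))) + (B) * (C*D - B*B) * (D)) := by noncomm_ring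
  rw [h]
  exact add_mem (add_mem (add_mem (add_mem (neg_mem (genI K (1) (A * D) _ (relmem0 K))) (genI K (C) (D) _ (relmem2 K))) (genI K (D) (D) _ (relmem3 K))) (neg_mem (genI K (1) (B * D) _ (relmem4 K)))) (genI K (B) (D) _ (relmem4 K))

lemma cert4_11 : B * (D * (B * D)) ∈ I K := by
  have h : B * (D * (B * D)) = (((((((((-((1) * (D*D - C*A) * (B * A)) + -((C) * (D*D - C*A) * (D))) + (B * B) * (D*D - C*A) * (1)) + (C) * (D*C - A*B) * (A)) + (B) * (D*B - A*A) * (D)) + (D) * (D*B - A*A) * (A)) + (1) * (D*A) * (A * A)) + -((1) * (C*D - B*B) * (C * A))) + (1) * (C*D - B*B) * (D * D)) + -((1) * (C*C - B*A) * (A * D))) := by noncomm_ring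
  rw [h]
  exact add_mem (add_mem (add_mem (add_mem (add_mem (add_mem (add_mem (add_mem (add_mem (neg_mem (genI K (1) (B * A) _ (relmem0 K))) (neg_mem (genI K (C) (D) _ (relmem0 K)))) (genI K (B * B) (1) _ (relmem0 K))) (genI K (C) (A) _ (relmem1 K))) (genI K (B) (D) _ (relmem2 K))) (genI K (D) (A) _ (relmem2 K))) (genI K (1) (A * A) _ (relmem3 K))) (neg_mem (genI K (1) (C * A) _ (relmem4 K)))) (genI K (1) (D * D) _ (relmem4 K))) (neg_mem (genI K (1) (A * D) _ (relmem5 K)))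

lemma cert4_12 : B * (D * (C * B)) ∈ I K := by
  have h : B * (D * (C * B)) = ((((((((((((((-((B) * (D*D - C*A) * (C)) + -((B) * (D*D - C*A) * (D))) + (B * D) * (D*D - C*A) * (1)) + (B) * (D*C - A*B) * (A)) + (B) * (D*C - A*B) * (B)) + (B * D) * (D*C - A*B) * (1)) + (B) * (D*A) * (B)) + -((C * C) * (C*D - B*B) * (1))) + -((1) * (C*C - B*A) * (B * B))) + -((1) * (C*C - B*A) * (C * C))) + (C) * (C*C - B*A) * (C)) + (C) * (C*C - B*A) * (D)) + -((B * A) * (C*C - B*A) * (1))) + (1) * (C*B - B*C) * (A * C)) + (1) * (C*B - B*C) * (A * D)) := by noncomm_ring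
  rw [h]
  exact add_mem (add_mem (add_mem (add_mem (add_mem (add_mem (add_mem (add_mem (add_mem (add_mem (add_mem (add_mem (add_mem (add_mem (neg_mem (genI K (B) (C) _ (relmem0 K))) (neg_mem (genI K (B) (D) _ (relmem0 K)))) (genI K (B * D) (1) _ (relmem0 K))) (genI K (B) (A) _ (relmem1 K))) (genI K (B) (B) _ (relmem1 K))) (genI K (B * D) (1) _ (relmem1 K))) (genI K (B) (B) _ (relmem3 K))) (neg_mem (genI K (C * C) (1) _ (relmem4 K)))) (neg_mem (genI K (1) (B * B) _ (relmem5 K)))) (neg_mem (genI K (1) (C * C) _ (relmem5 K)))) (genI K (C) (C) _ (relmem5 K))) (genI K (C) (D) _ (relmem5 K))) (neg_mem (genI K (B * A) (1) _ (relmem5 K)))) (genI K (1) (A * C) _ (relmem6 K))) (genI K (1) (A * D) _ (relmem6 K))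

lemma cert4_13 : B * (D * (C * C)) ∈ I K := by
  have h : B * (D * (C * C)) = (((((-((C) * (D*D - C*A) * (A)) + (B) * (D*B - A*A) * (A)) + (B * B) * (D*A) * (1)) + (1) * (C*D - B*B) * (D * A)) + -((1) * (C*C - B*A) * (A * A))) + (B * D) * (C*C - B*A) * (1)) := by noncomm_ring
  rw [h]
  exact add_mem (add_mem (add_mem (add_mem (add_mem (neg_mem (genI K (C) (A) _ (relmem0 K))) (genI K (B) (A) _ (relmem2 K))) (genI K (B * B) (1) _ (relmem3 K))) (genI K (1) (D * A) _ (relmem4 K))) (neg_mem (genI K (1) (A * A) _ (relmem5 K)))) (genI K (B * D) (1) _ (relmem5 K))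

lemma cert4_14 : B * (D * (C * D)) ∈ I K := by
  have h : B * (D * (C * D)) = (((((((-((C) * (D*D - C*A) * (B)) + (B) * (D*B - A*A) * (B)) + (B * B) * (D*B - A*A) * (1)) + (C) * (D*A) * (A)) + -((1) * (C*D - B*B) * (A * A))) + (1) * (C*D - B*B) * (D * B)) + (B * D) * (C*D - B*B) * (1)) + -((1) * (C*C - B*A) * (A * B))) := by noncomm_ring
  rw [h]
  exact add_mem (add_mem (add_mem (add_mem (add_mem (add_mem (add_mem (neg_mem (genI K (C) (B) _ (relmem0 K))) (genI K (B) (B) _ (relmem2 K))) (genI K (B * B) (1) _ (relmem2 K))) (genI K (C) (A) _ (relmem3 K))) (neg_mem (genI K (1) (A * A) _ (relmem4 K)))) (genI K (1) (D * B) _ (relmem4 K))) (genI K (B * D) (1) _ (relmem4 K))) (neg_mem (genI K (1) (A * B) _ (relmem5 K)))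

lemma cert4_15 : B * (D * (D * D)) ∈ I K := by
  have h : B * (D * (D * D)) = ((((((((-((B) * (D*D - C*A) * (C)) + (B * D) * (D*D - C*A) * (1)) + (B) * (D*C - A*B) * (A)) + (B * D) * (D*C - A*B) * (1)) + (B) * (D*A) * (B)) + -((1) * (C*C - B*A) * (C * C))) + (C) * (C*C - B*A) * (C)) + -((B * A) * (C*C - B*A) * (1))) + (1) * (C*B - B*C) * (A * C)) := by noncomm_ring
  rw [h]
  exact add_mem (add_mem (add_mem (add_mem (add_mem (add_mem (add_mem (add_mem (neg_mem (genI K (B) (C) _ (relmem0 K))) (genI K (B * D) (1) _ (relmem0 K))) (genI K (B) (A) _ (relmem1 K))) (genI K (B * D) (1) _ (relmem1 K))) (genI K (B) (B) _ (relmem3 K))) (neg_mem (genI K (1) (C * C) _ (relmem5 K)))) (genI K (C) (C) _ (relmem5 K))) (neg_mem (genI K (B * A) (1) _ (relmem5 K)))) (genI K (1) (A * C) _ (relmem6 K))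

lemma cert4_16 : C * (A * (D * D)) ∈ I K := by
  have h : C * (A * (D * D)) = ((((-((1) * (D*D - C*A) * (C * A)) + (C * A) * (D*D - C*A) * (1)) + (D) * (D*C - A*B) * (A)) + (1) * (D*A) * (C * C)) + -((D * A) * (C*C - B*A) * (1))) := by noncomm_ring
  rw [h]
  exact add_mem (add_mem (add_mem (add_mem (neg_mem (genI K (1) (C * A) _ (relmem0 K))) (genI K (C * A) (1) _ (relmem0 K))) (genI K (D) (A) _ (relmem1 K))) (genI K (1) (C * C) _ (relmem3 K))) (neg_mem (genI K (D * A) (1) _ (relmem5 K)))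

lemma cert4_17 : C * (C * (C * C)) ∈ I K := by
  have h : C * (C * (C * C)) = ((((-((B) * (D*D - C*A) * (C)) + (B * D) * (D*C - A*B) * (1)) + (B) * (D*A) * (B)) + (C) * (C*C - B*A) * (C)) + (1) * (C*B - B*C) * (A * C)) := by noncomm_ring
  rw [h]
  exact add_mem (add_mem (add_mem (add_mem (neg_mem (genI K (B) (C) _ (relmem0 K))) (genI K (B * D) (1) _ (relmem1 K))) (genI K (B) (B) _ (relmem3 K))) (genI K (C) (C) _ (relmem5 K))) (genI K (1) (A * C) _ (relmem6 K))

lemma cert4_18 : C * (C * (D * D)) ∈ I K := by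
  have h : C * (C * (D * D)) = ((((-((B) * (D*D - C*A) * (A)) + (C * C) * (D*D - C*A) * (1)) + (B * D) * (D*A) * (1)) + (C) * (C*C - B*A) * (A)) + (1) * (C*B - B*C) * (A * A)) := by noncomm_ring
  rw [h]
  exact add_mem (add_mem (add_mem (add_mem (neg_mem (genI K (B) (A) _ (relmem0 K))) (genI K (C * C) (1) _ (relmem0 K))) (genI K (B * D) (1) _ (relmem3 K))) (genI K (C) (A) _ (relmem5 K))) (genI K (1) (A * A) _ (relmem6 K))

lemma cert4_19 : C * (D * (B * D)) ∈ I K := by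
  have h : C * (D * (B * D)) = ((-((1) * (D*D - C*A) * (A * D)) + (C) * (D*B - A*A) * (D)) + (D) * (D*A) * (D)) := by noncomm_ring
  rw [h]
  exact add_mem (add_mem (neg_mem (genI K (1) (A * D) _ (relmem0 K))) (genI K (C) (D) _ (relmem2 K))) (genI K (D) (D) _ (relmem3 K))

lemma cert4_20 : C * (D * (C * B)) ∈ I K := by
  have h : C * (D * (C * B)) = ((((-((1) * (D*D - C*A) * (C * D)) + (C) * (D*C - A*B) * (B)) + (D) * (D*C - A*B) * (D)) + (1) * (D*A) * (B * D)) + -((C * A) * (C*D - B*B) * (1))) := by noncomm_ring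
  rw [h]
  exact add_mem (add_mem (add_mem (add_mem (neg_mem (genI K (1) (C * D) _ (relmem0 K))) (genI K (C) (B) _ (relmem1 K))) (genI K (D) (D) _ (relmem1 K))) (genI K (1) (B * D) _ (relmem3 K))) (neg_mem (genI K (C * A) (1) _ (relmem4 K)))

lemma cert4_21 : C * (D * (C * C)) ∈ I K := by
  have h : C * (D * (C * C)) = (((-((1) * (D*D - C*A) * (B * C)) + (C) * (D*C - A*B) * (C)) + (D) * (D*B - A*A) * (C)) + (1) * (D*A) * (A * C)) := by noncomm_ring
  rw [h]
  exact add_mem (add_mem (add_mem (neg_mem (genI K (1) (B * C) _ (relmem0 K))) (genI K (C) (C) _ (relmem1 K))) (genI K (D) (C) _ (relmem2 K))) (genI K (1) (A * C) _ (relmem3 K))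

lemma cert4_22 : C * (D * (C * D)) ∈ I K := by
  have h : C * (D * (C * D)) = (((((-((B) * (D*D - C*A) * (A)) + (B * C) * (D*B - A*A) * (1)) + (B * D) * (D*A) * (1)) + (1) * (C*D - B*B) * (C * D)) + -((B) * (C*D - B*B) * (B))) + (B * B) * (C*D - B*B) * (1)) := by noncomm_ring
  rw [h]
  exact add_mem (add_mem (add_mem (add_mem (add_mem (neg_mem (genI K (B) (A) _ (relmem0 K))) (genI K (B * C) (1) _ (relmem2 K))) (genI K (B * D) (1) _ (relmem3 K))) (genI K (1) (C * D) _ (relmem4 K))) (neg_mem (genI K (B) (B) _ (relmem4 K)))) (genI K (B * B) (1) _ (relmem4 K))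

lemma cert4_23 : C * (D * (D * D)) ∈ I K := by
  have h : C * (D * (D * D)) = ((((((-((1) * (D*D - C*A) * (B * A)) + (B * B) * (D*D - C*A) * (1)) + (C) * (D*C - A*B) * (A)) + (D) * (D*B - A*A) * (A)) + (1) * (D*A) * (A * A)) + -((1) * (C*D - B*B) * (C * A))) + (1) * (C*D - B*B) * (D * D)) := by noncomm_ring
  rw [h]
  exact add_mem (add_mem (add_mem (add_mem (add_mem (add_mem (neg_mem (genI K (1) (B * A) _ (relmem0 K))) (genI K (B * B) (1) _ (relmem0 K))) (genI K (C) (A) _ (relmem1 K))) (genI K (D) (A) _ (relmem2 K))) (genI K (1) (A * A) _ (relmem3 K))) (neg_mem (genI K (1) (C * A) _ (relmem4 K)))) (genI K (1) (D * D) _ (relmem4 K))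

lemma cert4_24 : D * (A * (D * D)) ∈ I K := by
  have h : D * (A * (D * D)) = ((D * A) * (D*D - C*A) * (1) + (1) * (D*A) * (C * A)) := by noncomm_ring
  rw [h]
  exact add_mem (genI K (D * A) (1) _ (relmem0 K)) (genI K (1) (C * A) _ (relmem3 K))

lemma cert4_25 : D * (C * (C * C)) ∈ I K := by
  have h : D * (C * (C * C)) = ((((1) * (D*C - A*B) * (C * C) + (A * C) * (D*A) * (1)) + -((A) * (C*D - B*B) * (A))) + (A * B) * (C*C - B*A) * (1)) := by noncomm_ring
  rw [h]
  exact add_mem (add_mem (add_mem (genI K (1) (C * C) _ (relmem1 K)) (genI K (A * C) (1) _ (relmem3 K))) (neg_mem (genI K (A) (A) _ (relmem4 K)))) (genI K (A * B) (1) _ (relmem5 K))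

lemma cert4_26 : D * (C * (D * D)) ∈ I K := by
  have h : D * (C * (D * D)) = (((((((((((((-((1) * (D*D - C*A) * (A * A)) + (1) * (D*D - C*A) * (D * B)) + -((D) * (D*D - C*A) * (B))) + (D * C) * (D*D - C*A) * (1)) + (A) * (D*C - A*B) * (C)) + (D * C) * (D*C - A*B) * (1)) + (1) * (D*B - A*A) * (A * A)) + -((1) * (D*B - A*A) * (B * C))) + -((A) * (D*B - A*A) * (A))) + (C * A) * (D*B - A*A) * (1)) + (D) * (D*A) * (A)) + -((D) * (C*D - B*B) * (C))) + (D) * (C*C - B*A) * (A)) + -((A * D) * (C*C - B*A) * (1))) := by noncomm_ring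
  rw [h]
  exact add_mem (add_mem (add_mem (add_mem (add_mem (add_mem (add_mem (add_mem (add_mem (add_mem (add_mem (add_mem (add_mem (neg_mem (genI K (1) (A * A) _ (relmem0 K))) (genI K (1) (D * B) _ (relmem0 K))) (neg_mem (genI K (D) (B) _ (relmem0 K)))) (genI K (D * C) (1) _ (relmem0 K))) (genI K (A) (C) _ (relmem1 K))) (genI K (D * C) (1) _ (relmem1 K))) (genI K (1) (A * A) _ (relmem2 K))) (neg_mem (genI K (1) (B * C) _ (relmem2 K)))) (neg_mem (genI K (A) (A) _ (relmem2 K)))) (genI K (C * A) (1) _ (relmem2 K))) (genI K (D) (A) _ (relmem3 K))) (neg_mem (genI K (D) (C) _ (relmem4 K)))) (genI K (D) (A) _ (relmem5 K))) (neg_mem (genI K (A * D) (1) _ (relmem5 K)))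

lemma cert4_27 : D * (D * (B * D)) ∈ I K := by
  have h : D * (D * (B * D)) = ((((((((1) * (D*D - C*A) * (B * D) + -((B) * (D*D - C*A) * (A))) + -((C) * (D*C - A*B) * (D))) + (B * C) * (D*B - A*A) * (1)) + (B * D) * (D*A) * (1)) + (1) * (C*D - B*B) * (C * D)) + -((B) * (C*D - B*B) * (B))) + (B * B) * (C*D - B*B) * (1)) := by noncomm_ring
  rw [h]
  exact add_mem (add_mem (add_mem (add_mem (add_mem (add_mem (add_mem (genI K (1) (B * D) _ (relmem0 K)) (neg_mem (genI K (B) (A) _ (relmem0 K)))) (neg_mem (genI K (C) (D) _ (relmem1 K)))) (genI K (B * C) (1) _ (relmem2 K))) (genI K (B * D) (1) _ (relmem3 K))) (genI K (1) (C * D) _ (relmem4 K))) (neg_mem (genI K (B) (B) _ (relmem4 K)))) (genI K (B * B) (1) _ (relmem4 K))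

lemma cert4_28 : D * (D * (C * B)) ∈ I K := by
  have h : D * (D * (C * B)) = ((D) * (D*C - A*B) * (B) + (1) * (D*A) * (B * B)) := by noncomm_ring
  rw [h]
  exact add_mem (genI K (D) (B) _ (relmem1 K)) (genI K (1) (B * B) _ (relmem3 K))

lemma cert4_29 : D * (D * (C * C)) ∈ I K := by
  have h : D * (D * (C * C)) = ((D) * (D*C - A*B) * (C) + (1) * (D*A) * (B * C)) := by noncomm_ring
  rw [h]
  exact add_mem (genI K (D) (C) _ (relmem1 K)) (genI K (1) (B * C) _ (relmem3 K))

lemma cert4_30 : D * (D * (C * D)) ∈ I K := by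
  have h : D * (D * (C * D)) = ((D) * (D*C - A*B) * (D) + (1) * (D*A) * (B * D)) := by noncomm_ring
  rw [h]
  exact add_mem (genI K (D) (D) _ (relmem1 K)) (genI K (1) (B * D) _ (relmem3 K))

lemma cert4_31 : D * (D * (D * D)) ∈ I K := by
  have h : D * (D * (D * D)) = (((((-((1) * (D*D - C*A) * (C * A)) + (1) * (D*D - C*A) * (D * D)) + (C * A) * (D*D - C*A) * (1)) + (D) * (D*C - A*B) * (A)) + (1) * (D*A) * (C * C)) + -((D * A) * (C*C - B*A) * (1))) := by noncomm_ring
  rw [h]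
  exact add_mem (add_mem (add_mem (add_mem (add_mem (neg_mem (genI K (1) (C * A) _ (relmem0 K))) (genI K (1) (D * D) _ (relmem0 K))) (genI K (C * A) (1) _ (relmem0 K))) (genI K (D) (A) _ (relmem1 K))) (genI K (1) (C * C) _ (relmem3 K))) (neg_mem (genI K (D * A) (1) _ (relmem5 K)))


lemma step0 (x : Fin 4) : ∀ b ∈ B0 K, ι K x * b ∈ S1 K := by
  intro b hb
  simp only [B0, Set.mem_singleton_iff] at hb
  subst hb
  rw [mul_one]
  refine Submodule.mem_sup_left (Submodule.subset_span ?_)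
  fin_cases x
  exacts [Or.inl rfl, Or.inr (Or.inl rfl), Or.inr (Or.inr (Or.inl rfl)),
    Or.inr (Or.inr (Or.inr rfl))]

lemma step1 (x : Fin 4) : ∀ b ∈ B1 K, ι K x * b ∈ S2 K := by
  intro b hb
  simp only [B1, Set.mem_insert_iff, Set.mem_singleton_iff] at hb
  fin_cases x <;> rcases hb with rfl|rfl|rfl|rfl
  exacts [cert2_0 K, cert2_1 K, cert2_2 K, cert2_3 K, cert2_4 K, cert2_5 K, cert2_6 K, cert2_7 K, cert2_8 K, cert2_9 K, cert2_10 K, cert2_11 K, cert2_12 K, cert2_13 K, cert2_14 K, cert2_15 K]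

lemma step2 (x : Fin 4) : ∀ b ∈ B2 K, ι K x * b ∈ S3 K := by
  intro b hb
  simp only [B2, Set.mem_insert_iff, Set.mem_singleton_iff] at hb
  fin_cases x <;> rcases hb with rfl|rfl|rfl|rfl|rfl|rfl|rfl|rfl|rfl
  exacts [cert3_0 K, cert3_1 K, cert3_2 K, cert3_3 K, cert3_4 K, cert3_5 K, cert3_6 K, cert3_7 K, cert3_8 K, cert3_9 K, cert3_10 K, cert3_11 K, cert3_12 K, cert3_13 K, cert3_14 K, cert3_15 K, cert3_16 K, cert3_17 K, cert3_18 K, cert3_19 K, cert3_20 K, cert3_21 K, cert3_22 K, cert3_23 K, cert3_24 K, cert3_25 K, cert3_26 K, cert3_27 K, cert3_28 K, cert3_29 K, cert3_30 K, cert3_31 K, cert3_32 K, cert3_33 K, cert3_34 K, cert3_35 K]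

lemma step3 (x : Fin 4) : ∀ b ∈ B3 K, ι K x * b ∈ I K := by
  intro b hb
  simp only [B3, Set.mem_insert_iff, Set.mem_singleton_iff] at hb
  fin_cases x <;> rcases hb with rfl|rfl|rfl|rfl|rfl|rfl|rfl|rfl
  exacts [cert4_0 K, cert4_1 K, cert4_2 K, cert4_3 K, cert4_4 K, cert4_5 K, cert4_6 K, cert4_7 K, cert4_8 K, cert4_9 K, cert4_10 K, cert4_11 K, cert4_12 K, cert4_13 K, cert4_14 K, cert4_15 K, cert4_16 K, cert4_17 K, cert4_18 K, cert4_19 K, cert4_20 K, cert4_21 K, cert4_22 K, cert4_23 K, cert4_24 K, cert4_25 K, cert4_26 K, cert4_27 K, cert4_28 K, cert4_29 K, cert4_30 K, cert4_31 K]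

lemma stepS0 (x : Fin 4) {y : FreeAlgebra K (Fin 4)} (hy : y ∈ S0 K) :
    ι K x * y ∈ S1 K := by
  obtain ⟨p, hp, i, hi, rfl⟩ := Submodule.mem_sup.1 hy
  clear hy
  rw [mul_add]
  refine add_mem ?_ (Submodule.mem_sup_right (I_mul_left K _ hi))
  induction hp using Submodule.span_induction with
  | mem b hb => exact step0 K x b hb
  | zero => rw [mul_zero]; exact zero_mem _
  | add a b _ _ ha hb => rw [mul_add]; exact add_mem ha hb
  | smul t a _ ha => rw [mul_smul_comm]; exact Submodule.smul_mem _ _ ha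

lemma stepS1 (x : Fin 4) {y : FreeAlgebra K (Fin 4)} (hy : y ∈ S1 K) :
    ι K x * y ∈ S2 K := by
  obtain ⟨p, hp, i, hi, rfl⟩ := Submodule.mem_sup.1 hy
  clear hy
  rw [mul_add]
  refine add_mem ?_ (Submodule.mem_sup_right (I_mul_left K _ hi))
  induction hp using Submodule.span_induction with
  | mem b hb => exact step1 K x b hb
  | zero => rw [mul_zero]; exact zero_mem _
  | add a b _ _ ha hb => rw [mul_add]; exact add_mem ha hb
  | smul t a _ ha => rw [mul_smul_comm]; exact Submodule.smul_mem _ _ ha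

lemma stepS2 (x : Fin 4) {y : FreeAlgebra K (Fin 4)} (hy : y ∈ S2 K) :
    ι K x * y ∈ S3 K := by
  obtain ⟨p, hp, i, hi, rfl⟩ := Submodule.mem_sup.1 hy
  clear hy
  rw [mul_add]
  refine add_mem ?_ (Submodule.mem_sup_right (I_mul_left K _ hi))
  induction hp using Submodule.span_induction with
  | mem b hb => exact step2 K x b hb
  | zero => rw [mul_zero]; exact zero_mem _
  | add a b _ _ ha hb => rw [mul_add]; exact add_mem ha hb
  | smul t a _ ha => rw [mul_smul_comm]; exact Submodule.smul_mem _ _ ha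

lemma stepS3 (x : Fin 4) {y : FreeAlgebra K (Fin 4)} (hy : y ∈ S3 K) :
    ι K x * y ∈ I K := by
  obtain ⟨p, hp, i, hi, rfl⟩ := Submodule.mem_sup.1 hy
  clear hy
  rw [mul_add]
  refine add_mem ?_ (I_mul_left K _ hi)
  induction hp using Submodule.span_induction with
  | mem b hb => exact step3 K x b hb
  | zero => rw [mul_zero]; exact zero_mem _
  | add a b _ _ ha hb => rw [mul_add]; exact add_mem ha hb
  | smul t a _ ha => rw [mul_smul_comm]; exact Submodule.smul_mem _ _ ha

/-! ### Words land in the normal-form spans. -/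

lemma word_zero (f : Fin 0 → Fin 4) : word K 4 f = 1 := by
  simp [word]

lemma word_succ {q : ℕ} (f : Fin (q + 1) → Fin 4) :
    word K 4 f = ι K (f 0) * word K 4 (fun i : Fin q => f i.succ) := by
  simp [word, List.ofFn_succ]

lemma wordS0 (f : Fin 0 → Fin 4) : word K 4 f ∈ S0 K := by
  rw [word_zero]
  exact Submodule.mem_sup_left (Submodule.subset_span rfl)

lemma wordS1 (f : Fin 1 → Fin 4) : word K 4 f ∈ S1 K := by
  rw [word_succ]; exact stepS0 K (f 0) (wordS0 K _)

lemma wordS2 (f : Fin 2 → Fin 4) : word K 4 f ∈ S2 K := by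
  rw [word_succ]; exact stepS1 K (f 0) (wordS1 K _)

lemma wordS3 (f : Fin 3 → Fin 4) : word K 4 f ∈ S3 K := by
  rw [word_succ]; exact stepS2 K (f 0) (wordS2 K _)

lemma wordI : ∀ (k : ℕ) (f : Fin (4 + k) → Fin 4), word K 4 f ∈ I K := by
  intro k
  induction k with
  | zero =>
    intro f
    rw [word_succ K (q := 3)]
    exact stepS3 K (f 0) (wordS3 K _)
  | succ k ih =>
    intro f
    rw [word_succ K (q := 4 + k)]
    exact I_mul_left K _ (ih _)

/-! ### The matrix representation. -/

noncomputable def castM : Matrix (Fin 22) (Fin 22) ℤ →+* Matrix (Fin 22) (Fin 22) K :=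
  (Int.castRingHom K).mapMatrix

noncomputable def phi : FreeAlgebra K (Fin 4) →ₐ[K] Matrix (Fin 22) (Fin 22) K :=
  FreeAlgebra.lift K (fun x => castM K (N x))

lemma phi_ι (x : Fin 4) : phi K (ι K x) = castM K (N x) := by
  simp [phi]

lemma phi_rels : ∀ r ∈ Rels K, phi K r = 0 := by
  intro r hr
  simp only [Rels, Set.mem_insert_iff, Set.mem_singleton_iff] at hr
  rcases hr with rfl | rfl | rfl | rfl | rfl | rfl | rfl
  · rw [map_sub, map_mul, map_mul]
    simp only [phi_ι]
    rw [← map_mul (castM K), ← map_mul (castM K), relN0, sub_self]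
  · rw [map_sub, map_mul, map_mul]
    simp only [phi_ι]
    rw [← map_mul (castM K), ← map_mul (castM K), relN1, sub_self]
  · rw [map_sub, map_mul, map_mul]
    simp only [phi_ι]
    rw [← map_mul (castM K), ← map_mul (castM K), relN2, sub_self]
  · rw [map_mul]
    simp only [phi_ι]
    rw [← map_mul (castM K), relN3, map_zero]
  · rw [map_sub, map_mul, map_mul]
    simp only [phi_ι]
    rw [← map_mul (castM K), ← map_mul (castM K), relN4, sub_self]
  · rw [map_sub, map_mul, map_mul]
    simp only [phi_ι]
    rw [← map_mul (castM K), ← map_mul (castM K), relN5, sub_self]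
  · rw [map_sub, map_mul, map_mul]
    simp only [phi_ι]
    rw [← map_mul (castM K), ← map_mul (castM K), relN6, sub_self]

lemma I_le_ker : I K ≤ LinearMap.ker (phi K).toLinearMap := by
  rw [I, idealSpan, Submodule.span_le]
  rintro z ⟨u, v, r, hr, rfl⟩
  simp only [SetLike.mem_coe, LinearMap.mem_ker, AlgHom.toLinearMap_apply, map_mul,
    phi_rels K r hr, mul_zero, zero_mul]

noncomputable def psi : (FreeAlgebra K (Fin 4) ⧸ I K) →ₗ[K] Matrix (Fin 22) (Fin 22) K :=
  Submodule.liftQ (I K) (phi K).toLinearMap (I_le_ker K)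

lemma psi_mk (x : FreeAlgebra K (Fin 4)) :
    psi K (Submodule.Quotient.mk x) = phi K x := rfl

lemma phi_word {q : ℕ} (f : Fin q → Fin 4) :
    phi K (word K 4 f) = castM K (((List.ofFn f).map N).prod) := by
  rw [word, map_list_prod, map_list_prod, List.map_map, List.map_map]
  congr 1
  exact List.map_congr_left fun x _ => phi_ι K x

/-- Evaluation of a matrix along selected rows of its column `0`. -/
noncomputable def eps (n : ℕ) (idx : Fin n → Fin 22) :
    Matrix (Fin 22) (Fin 22) K →ₗ[K] (Fin n → K) where
  toFun m := fun j => m (idx j) 0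
  map_add' _ _ := rfl
  map_smul' _ _ := rfl

lemma castM_entry (X : Matrix (Fin 22) (Fin 22) ℤ) (i j : Fin 22) :
    castM K X i j = (X i j : K) := by
  simp [castM, RingHom.mapMatrix_apply, Matrix.map_apply]

end HilbR4

namespace HilbR4
variable (K : Type*) [Field K]
local notation "A" => (ι K (0:Fin 4) : FreeAlgebra K (Fin 4))
local notation "B" => (ι K (1:Fin 4) : FreeAlgebra K (Fin 4))
local notation "C" => (ι K (2:Fin 4) : FreeAlgebra K (Fin 4))
local notation "D" => (ι K (3:Fin 4) : FreeAlgebra K (Fin 4))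
lemma weq0_0 : word K 4 (w0f 0) = (1 : FreeAlgebra K (Fin 4)) := by
  simp [word]

lemma weq1_0 : word K 4 (w1f 0) = A := by
  rw [show w1f 0 = ![(0 : Fin 4)] by decide]
  simp [word, List.ofFn_succ]

lemma weq1_1 : word K 4 (w1f 1) = B := by
  rw [show w1f 1 = ![(1 : Fin 4)] by decide]
  simp [word, List.ofFn_succ]

lemma weq1_2 : word K 4 (w1f 2) = C := by
  rw [show w1f 2 = ![(2 : Fin 4)] by decide]
  simp [word, List.ofFn_succ]

lemma weq1_3 : word K 4 (w1f 3) = D := by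
  rw [show w1f 3 = ![(3 : Fin 4)] by decide]
  simp [word, List.ofFn_succ]

lemma weq2_0 : word K 4 (w2f 0) = A * C := by
  rw [show w2f 0 = ![(0 : Fin 4), (2 : Fin 4)] by decide]
  simp [word, List.ofFn_succ]

lemma weq2_1 : word K 4 (w2f 1) = A * D := by
  rw [show w2f 1 = ![(0 : Fin 4), (3 : Fin 4)] by decide]
  simp [word, List.ofFn_succ]

lemma weq2_2 : word K 4 (w2f 2) = B * D := by
  rw [show w2f 2 = ![(1 : Fin 4), (3 : Fin 4)] by decide]
  simp [word, List.ofFn_succ]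

lemma weq2_3 : word K 4 (w2f 3) = C * B := by
  rw [show w2f 3 = ![(2 : Fin 4), (1 : Fin 4)] by decide]
  simp [word, List.ofFn_succ]

lemma weq2_4 : word K 4 (w2f 4) = C * C := by
  rw [show w2f 4 = ![(2 : Fin 4), (2 : Fin 4)] by decide]
  simp [word, List.ofFn_succ]

lemma weq2_5 : word K 4 (w2f 5) = C * D := by
  rw [show w2f 5 = ![(2 : Fin 4), (3 : Fin 4)] by decide]
  simp [word, List.ofFn_succ]

lemma weq2_6 : word K 4 (w2f 6) = D * B := by
  rw [show w2f 6 = ![(3 : Fin 4), (1 : Fin 4)] by decide]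
  simp [word, List.ofFn_succ]

lemma weq2_7 : word K 4 (w2f 7) = D * C := by
  rw [show w2f 7 = ![(3 : Fin 4), (2 : Fin 4)] by decide]
  simp [word, List.ofFn_succ]

lemma weq2_8 : word K 4 (w2f 8) = D * D := by
  rw [show w2f 8 = ![(3 : Fin 4), (3 : Fin 4)] by decide]
  simp [word, List.ofFn_succ]

lemma weq3_0 : word K 4 (w3f 0) = A * (D * D) := by
  rw [show w3f 0 = ![(0 : Fin 4), (3 : Fin 4), (3 : Fin 4)] by decide]
  simp [word, List.ofFn_succ]

lemma weq3_1 : word K 4 (w3f 1) = C * (C * C) := by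
  rw [show w3f 1 = ![(2 : Fin 4), (2 : Fin 4), (2 : Fin 4)] by decide]
  simp [word, List.ofFn_succ]

lemma weq3_2 : word K 4 (w3f 2) = C * (D * D) := by
  rw [show w3f 2 = ![(2 : Fin 4), (3 : Fin 4), (3 : Fin 4)] by decide]
  simp [word, List.ofFn_succ]

lemma weq3_3 : word K 4 (w3f 3) = D * (B * D) := by
  rw [show w3f 3 = ![(3 : Fin 4), (1 : Fin 4), (3 : Fin 4)] by decide]
  simp [word, List.ofFn_succ]

lemma weq3_4 : word K 4 (w3f 4) = D * (C * B) := by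
  rw [show w3f 4 = ![(3 : Fin 4), (2 : Fin 4), (1 : Fin 4)] by decide]
  simp [word, List.ofFn_succ]

lemma weq3_5 : word K 4 (w3f 5) = D * (C * C) := by
  rw [show w3f 5 = ![(3 : Fin 4), (2 : Fin 4), (2 : Fin 4)] by decide]
  simp [word, List.ofFn_succ]

lemma weq3_6 : word K 4 (w3f 6) = D * (C * D) := by
  rw [show w3f 6 = ![(3 : Fin 4), (2 : Fin 4), (3 : Fin 4)] by decide]
  simp [word, List.ofFn_succ]

lemma weq3_7 : word K 4 (w3f 7) = D * (D * D) := by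
  rw [show w3f 7 = ![(3 : Fin 4), (3 : Fin 4), (3 : Fin 4)] by decide]
  simp [word, List.ofFn_succ]

end HilbR4

namespace HilbR4
variable (K : Type*) [Field K]

lemma indep0 : LinearIndependent K (fun j : Fin 1 =>
    (Submodule.Quotient.mk (word K 4 (w0f j)) : FreeAlgebra K (Fin 4) ⧸ I K)) := by
  apply LinearIndependent.of_comp ((eps K 1 idx0).comp (psi K))
  have hfam : (((eps K 1 idx0).comp (psi K)) ∘ fun j : Fin 1 =>
      (Submodule.Quotient.mk (word K 4 (w0f j)) : FreeAlgebra K (Fin 4) ⧸ I K))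
      = fun j => Pi.single j (1 : K) := by
    funext j
    ext i
    simp only [Function.comp_apply, LinearMap.comp_apply, psi_mk, phi_word, eps,
      LinearMap.coe_mk, AddHom.coe_mk, castM_entry]
    show (castM K (((List.ofFn (w0f j)).map N).prod)) (idx0 i) 0 = (Pi.single j (1 : K) : Fin 1 → K) i
    rw [castM_entry, colN0 i j, Pi.single_apply]
    split <;> simp
  rw [hfam]
  have hb := (Pi.basisFun K (Fin 1)).linearIndependent
  have heq : (⇑(Pi.basisFun K (Fin 1)) : Fin 1 → (Fin 1 → K)) = fun j => Pi.single j 1 :=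
    funext fun j => Pi.basisFun_apply K (Fin 1) j
  rwa [heq] at hb

lemma gc0 : gradedComp K 4 (Rels K) 0 =
    Submodule.span K (Set.range fun j : Fin 1 =>
      (Submodule.Quotient.mk (word K 4 (w0f j)) : FreeAlgebra K (Fin 4) ⧸ I K)) := by
  apply le_antisymm
  · rw [gradedComp, Submodule.span_le]
    rintro z ⟨f, rfl⟩
    show (Submodule.Quotient.mk (word K 4 f) : FreeAlgebra K (Fin 4) ⧸ I K) ∈
      (Submodule.span K (Set.range fun j : Fin 1 =>
        (Submodule.Quotient.mk (word K 4 (w0f j)) : FreeAlgebra K (Fin 4) ⧸ I K)) : Set _)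
    obtain ⟨p, hp, i, hi, heq⟩ := Submodule.mem_sup.1 (wordS0 K f)
    rw [← heq, Submodule.Quotient.mk_add, (Submodule.Quotient.mk_eq_zero _).2 hi, add_zero]
    clear heq hi
    induction hp using Submodule.span_induction with
    | mem b hb =>
      simp only [B0, Set.mem_insert_iff, Set.mem_singleton_iff] at hb
      rcases hb with rfl
      · exact Submodule.subset_span ⟨0, congrArg _ (weq0_0 K)⟩
    | zero => rw [Submodule.Quotient.mk_zero]; exact zero_mem _
    | add a b _ _ ha hb => rw [Submodule.Quotient.mk_add]; exact add_mem ha hb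
    | smul t a _ ha => rw [Submodule.Quotient.mk_smul]; exact Submodule.smul_mem _ _ ha
  · rw [gradedComp, Submodule.span_le]
    rintro z ⟨j, rfl⟩
    exact Submodule.subset_span ⟨w0f j, rfl⟩

lemma fr0 : Module.finrank K (gradedComp K 4 (Rels K) 0) = 1 := by
  rw [gc0]
  simpa using finrank_span_eq_card (indep0 K)

end HilbR4


namespace HilbR4
variable (K : Type*) [Field K]

lemma indep1 : LinearIndependent K (fun j : Fin 4 =>
    (Submodule.Quotient.mk (word K 4 (w1f j)) : FreeAlgebra K (Fin 4) ⧸ I K)) := by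
  apply LinearIndependent.of_comp ((eps K 4 idx1).comp (psi K))
  have hfam : (((eps K 4 idx1).comp (psi K)) ∘ fun j : Fin 4 =>
      (Submodule.Quotient.mk (word K 4 (w1f j)) : FreeAlgebra K (Fin 4) ⧸ I K))
      = fun j => Pi.single j (1 : K) := by
    funext j
    ext i
    simp only [Function.comp_apply, LinearMap.comp_apply, psi_mk, phi_word, eps,
      LinearMap.coe_mk, AddHom.coe_mk, castM_entry]
    show (castM K (((List.ofFn (w1f j)).map N).prod)) (idx1 i) 0 = (Pi.single j (1 : K) : Fin 4 → K) i
    rw [castM_entry, colN1 i j, Pi.single_apply]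
    split <;> simp
  rw [hfam]
  have hb := (Pi.basisFun K (Fin 4)).linearIndependent
  have heq : (⇑(Pi.basisFun K (Fin 4)) : Fin 4 → (Fin 4 → K)) = fun j => Pi.single j 1 :=
    funext fun j => Pi.basisFun_apply K (Fin 4) j
  rwa [heq] at hb

lemma gc1 : gradedComp K 4 (Rels K) 1 =
    Submodule.span K (Set.range fun j : Fin 4 =>
      (Submodule.Quotient.mk (word K 4 (w1f j)) : FreeAlgebra K (Fin 4) ⧸ I K)) := by
  apply le_antisymm
  · rw [gradedComp, Submodule.span_le]
    rintro z ⟨f, rfl⟩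
    show (Submodule.Quotient.mk (word K 4 f) : FreeAlgebra K (Fin 4) ⧸ I K) ∈
      (Submodule.span K (Set.range fun j : Fin 4 =>
        (Submodule.Quotient.mk (word K 4 (w1f j)) : FreeAlgebra K (Fin 4) ⧸ I K)) : Set _)
    obtain ⟨p, hp, i, hi, heq⟩ := Submodule.mem_sup.1 (wordS1 K f)
    rw [← heq, Submodule.Quotient.mk_add, (Submodule.Quotient.mk_eq_zero _).2 hi, add_zero]
    clear heq hi
    induction hp using Submodule.span_induction with
    | mem b hb =>
      simp only [B1, Set.mem_insert_iff, Set.mem_singleton_iff] at hb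
      rcases hb with rfl|rfl|rfl|rfl
      · exact Submodule.subset_span ⟨0, congrArg _ (weq1_0 K)⟩
      · exact Submodule.subset_span ⟨1, congrArg _ (weq1_1 K)⟩
      · exact Submodule.subset_span ⟨2, congrArg _ (weq1_2 K)⟩
      · exact Submodule.subset_span ⟨3, congrArg _ (weq1_3 K)⟩
    | zero => rw [Submodule.Quotient.mk_zero]; exact zero_mem _
    | add a b _ _ ha hb => rw [Submodule.Quotient.mk_add]; exact add_mem ha hb
    | smul t a _ ha => rw [Submodule.Quotient.mk_smul]; exact Submodule.smul_mem _ _ ha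
  · rw [gradedComp, Submodule.span_le]
    rintro z ⟨j, rfl⟩
    exact Submodule.subset_span ⟨w1f j, rfl⟩

lemma fr1 : Module.finrank K (gradedComp K 4 (Rels K) 1) = 4 := by
  rw [gc1]
  simpa using finrank_span_eq_card (indep1 K)

end HilbR4


namespace HilbR4
variable (K : Type*) [Field K]

lemma indep2 : LinearIndependent K (fun j : Fin 9 =>
    (Submodule.Quotient.mk (word K 4 (w2f j)) : FreeAlgebra K (Fin 4) ⧸ I K)) := by
  apply LinearIndependent.of_comp ((eps K 9 idx2).comp (psi K))
  have hfam : (((eps K 9 idx2).comp (psi K)) ∘ fun j : Fin 9 =>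
      (Submodule.Quotient.mk (word K 4 (w2f j)) : FreeAlgebra K (Fin 4) ⧸ I K))
      = fun j => Pi.single j (1 : K) := by
    funext j
    ext i
    simp only [Function.comp_apply, LinearMap.comp_apply, psi_mk, phi_word, eps,
      LinearMap.coe_mk, AddHom.coe_mk, castM_entry]
    show (castM K (((List.ofFn (w2f j)).map N).prod)) (idx2 i) 0 = (Pi.single j (1 : K) : Fin 9 → K) i
    rw [castM_entry, colN2 i j, Pi.single_apply]
    split <;> simp
  rw [hfam]
  have hb := (Pi.basisFun K (Fin 9)).linearIndependent
  have heq : (⇑(Pi.basisFun K (Fin 9)) : Fin 9 → (Fin 9 → K)) = fun j => Pi.single j 1 :=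
    funext fun j => Pi.basisFun_apply K (Fin 9) j
  rwa [heq] at hb

lemma gc2 : gradedComp K 4 (Rels K) 2 =
    Submodule.span K (Set.range fun j : Fin 9 =>
      (Submodule.Quotient.mk (word K 4 (w2f j)) : FreeAlgebra K (Fin 4) ⧸ I K)) := by
  apply le_antisymm
  · rw [gradedComp, Submodule.span_le]
    rintro z ⟨f, rfl⟩
    show (Submodule.Quotient.mk (word K 4 f) : FreeAlgebra K (Fin 4) ⧸ I K) ∈
      (Submodule.span K (Set.range fun j : Fin 9 =>
        (Submodule.Quotient.mk (word K 4 (w2f j)) : FreeAlgebra K (Fin 4) ⧸ I K)) : Set _)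
    obtain ⟨p, hp, i, hi, heq⟩ := Submodule.mem_sup.1 (wordS2 K f)
    rw [← heq, Submodule.Quotient.mk_add, (Submodule.Quotient.mk_eq_zero _).2 hi, add_zero]
    clear heq hi
    induction hp using Submodule.span_induction with
    | mem b hb =>
      simp only [B2, Set.mem_insert_iff, Set.mem_singleton_iff] at hb
      rcases hb with rfl|rfl|rfl|rfl|rfl|rfl|rfl|rfl|rfl
      · exact Submodule.subset_span ⟨0, congrArg _ (weq2_0 K)⟩
      · exact Submodule.subset_span ⟨1, congrArg _ (weq2_1 K)⟩
      · exact Submodule.subset_span ⟨2, congrArg _ (weq2_2 K)⟩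
      · exact Submodule.subset_span ⟨3, congrArg _ (weq2_3 K)⟩
      · exact Submodule.subset_span ⟨4, congrArg _ (weq2_4 K)⟩
      · exact Submodule.subset_span ⟨5, congrArg _ (weq2_5 K)⟩
      · exact Submodule.subset_span ⟨6, congrArg _ (weq2_6 K)⟩
      · exact Submodule.subset_span ⟨7, congrArg _ (weq2_7 K)⟩
      · exact Submodule.subset_span ⟨8, congrArg _ (weq2_8 K)⟩
    | zero => rw [Submodule.Quotient.mk_zero]; exact zero_mem _
    | add a b _ _ ha hb => rw [Submodule.Quotient.mk_add]; exact add_mem ha hb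
    | smul t a _ ha => rw [Submodule.Quotient.mk_smul]; exact Submodule.smul_mem _ _ ha
  · rw [gradedComp, Submodule.span_le]
    rintro z ⟨j, rfl⟩
    exact Submodule.subset_span ⟨w2f j, rfl⟩

lemma fr2 : Module.finrank K (gradedComp K 4 (Rels K) 2) = 9 := by
  rw [gc2]
  simpa using finrank_span_eq_card (indep2 K)

end HilbR4


namespace HilbR4
variable (K : Type*) [Field K]

lemma indep3 : LinearIndependent K (fun j : Fin 8 =>
    (Submodule.Quotient.mk (word K 4 (w3f j)) : FreeAlgebra K (Fin 4) ⧸ I K)) := by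
  apply LinearIndependent.of_comp ((eps K 8 idx3).comp (psi K))
  have hfam : (((eps K 8 idx3).comp (psi K)) ∘ fun j : Fin 8 =>
      (Submodule.Quotient.mk (word K 4 (w3f j)) : FreeAlgebra K (Fin 4) ⧸ I K))
      = fun j => Pi.single j (1 : K) := by
    funext j
    ext i
    simp only [Function.comp_apply, LinearMap.comp_apply, psi_mk, phi_word, eps,
      LinearMap.coe_mk, AddHom.coe_mk, castM_entry]
    show (castM K (((List.ofFn (w3f j)).map N).prod)) (idx3 i) 0 = (Pi.single j (1 : K) : Fin 8 → K) i
    rw [castM_entry, colN3 i j, Pi.single_apply]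
    split <;> simp
  rw [hfam]
  have hb := (Pi.basisFun K (Fin 8)).linearIndependent
  have heq : (⇑(Pi.basisFun K (Fin 8)) : Fin 8 → (Fin 8 → K)) = fun j => Pi.single j 1 :=
    funext fun j => Pi.basisFun_apply K (Fin 8) j
  rwa [heq] at hb

lemma gc3 : gradedComp K 4 (Rels K) 3 =
    Submodule.span K (Set.range fun j : Fin 8 =>
      (Submodule.Quotient.mk (word K 4 (w3f j)) : FreeAlgebra K (Fin 4) ⧸ I K)) := by
  apply le_antisymm
  · rw [gradedComp, Submodule.span_le]
    rintro z ⟨f, rfl⟩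
    show (Submodule.Quotient.mk (word K 4 f) : FreeAlgebra K (Fin 4) ⧸ I K) ∈
      (Submodule.span K (Set.range fun j : Fin 8 =>
        (Submodule.Quotient.mk (word K 4 (w3f j)) : FreeAlgebra K (Fin 4) ⧸ I K)) : Set _)
    obtain ⟨p, hp, i, hi, heq⟩ := Submodule.mem_sup.1 (wordS3 K f)
    rw [← heq, Submodule.Quotient.mk_add, (Submodule.Quotient.mk_eq_zero _).2 hi, add_zero]
    clear heq hi
    induction hp using Submodule.span_induction with
    | mem b hb =>
      simp only [B3, Set.mem_insert_iff, Set.mem_singleton_iff] at hb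
      rcases hb with rfl|rfl|rfl|rfl|rfl|rfl|rfl|rfl
      · exact Submodule.subset_span ⟨0, congrArg _ (weq3_0 K)⟩
      · exact Submodule.subset_span ⟨1, congrArg _ (weq3_1 K)⟩
      · exact Submodule.subset_span ⟨2, congrArg _ (weq3_2 K)⟩
      · exact Submodule.subset_span ⟨3, congrArg _ (weq3_3 K)⟩
      · exact Submodule.subset_span ⟨4, congrArg _ (weq3_4 K)⟩
      · exact Submodule.subset_span ⟨5, congrArg _ (weq3_5 K)⟩
      · exact Submodule.subset_span ⟨6, congrArg _ (weq3_6 K)⟩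
      · exact Submodule.subset_span ⟨7, congrArg _ (weq3_7 K)⟩
    | zero => rw [Submodule.Quotient.mk_zero]; exact zero_mem _
    | add a b _ _ ha hb => rw [Submodule.Quotient.mk_add]; exact add_mem ha hb
    | smul t a _ ha => rw [Submodule.Quotient.mk_smul]; exact Submodule.smul_mem _ _ ha
  · rw [gradedComp, Submodule.span_le]
    rintro z ⟨j, rfl⟩
    exact Submodule.subset_span ⟨w3f j, rfl⟩

lemma fr3 : Module.finrank K (gradedComp K 4 (Rels K) 3) = 8 := by
  rw [gc3]
  simpa using finrank_span_eq_card (indep3 K)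

end HilbR4

namespace HilbR4
variable (K : Type*) [Field K]

lemma gcBot : ∀ q : ℕ, 4 ≤ q → gradedComp K 4 (Rels K) q = ⊥ := by
  intro q hq
  rw [gradedComp, Submodule.span_eq_bot]
  rintro z ⟨f, rfl⟩
  obtain ⟨k, rfl⟩ := Nat.exists_eq_add_of_le hq
  exact (Submodule.Quotient.mk_eq_zero _).2 (wordI K k f)

end HilbR4

/-- `R = K⟨a,b,c,d⟩/(d² − ca, dc − ab, db − a², da, cd − b², c² − ba, cb − bc)`
is 4-step nilpotent with Hilbert series `1 + 4t + 9t² + 8t³`. -/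
theorem hilbert_R4 (K : Type*) [Field K] :
    let a : FreeAlgebra K (Fin 4) := ι K 0
    let b : FreeAlgebra K (Fin 4) := ι K 1
    let c : FreeAlgebra K (Fin 4) := ι K 2
    let d : FreeAlgebra K (Fin 4) := ι K 3
    let rels : Set (FreeAlgebra K (Fin 4)) :=
      {d * d - c * a, d * c - a * b, d * b - a * a, d * a,
       c * d - b * b, c * c - b * a, c * b - b * c}
    Module.finrank K (gradedComp K 4 rels 0) = 1 ∧
    Module.finrank K (gradedComp K 4 rels 1) = 4 ∧
    Module.finrank K (gradedComp K 4 rels 2) = 9 ∧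
    Module.finrank K (gradedComp K 4 rels 3) = 8 ∧
    ∀ q : ℕ, 4 ≤ q → gradedComp K 4 rels q = ⊥ := by
  show Module.finrank K (gradedComp K 4 (HilbR4.Rels K) 0) = 1 ∧
       Module.finrank K (gradedComp K 4 (HilbR4.Rels K) 1) = 4 ∧
       Module.finrank K (gradedComp K 4 (HilbR4.Rels K) 2) = 9 ∧
       Module.finrank K (gradedComp K 4 (HilbR4.Rels K) 3) = 8 ∧
       ∀ q : ℕ, 4 ≤ q → gradedComp K 4 (HilbR4.Rels K) q = ⊥
  exact ⟨HilbR4.fr0 K, HilbR4.fr1 K, HilbR4.fr2 K, HilbR4.fr3 K, HilbR4.gcBot K⟩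
end

section
/- If a formal power series H(t) = Σ h_q t^q with nonnegative integer coefficients satisfies H(t)(1 − 2t + t²) ≥ 1 coefficientwise, then h_q ≥ q + 1 for all q ≥ 0; in particular H is not a polynomial. -/
/-- If a power series `H(t) = Σ h_q t^q` with nonnegative integer coefficients
satisfies `H(t)(1 - 2t + t²) ≥ 1` coefficientwise, then `h_q ≥ q + 1` for all
`q`; in particular `H` is not a polynomial. -/
theorem gs_boundary_case (h : ℕ → ℕ)
    (h0 : 1 ≤ h 0)
    (h1 : 0 ≤ (h 1 : ℤ) - 2 * h 0)
    (hq : ∀ q : ℕ, 2 ≤ q → 0 ≤ (h q : ℤ) - 2 * h (q - 1) + h (q - 2)) :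
    ∀ q : ℕ, q + 1 ≤ h q := by
  have hd : ∀ q : ℕ, (h q : ℤ) + 1 ≤ h (q + 1) := by
    intro q
    induction q with
    | zero =>
      have : (1 : ℤ) ≤ h 0 := by exact_mod_cast h0
      linarith
    | succ n ih =>
      have := hq (n + 2) (by omega)
      have e1 : n + 2 - 1 = n + 1 := rfl
      have e2 : n + 2 - 2 = n := rfl
      rw [e1, e2] at this
      linarith
  intro q
  induction q with
  | zero => simpa using h0
  | succ n ih =>
    have := hd n
    have : (n : ℤ) + 1 + 1 ≤ h (n + 1) := by
      have hn : (n : ℤ) + 1 ≤ h n := by exact_mod_cast ih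
      linarith
    exact_mod_cast this
end
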